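/- arXiv:1607.04904 — 7 statements merged into one kernel-verified Lean document; each statement's English description precedes it below -/
import Mathlib

section
/- (Erdős–Rado) Let κ be a regular infinite cardinal and let ρ < κ be a nonzero cardinal. Then (2^{<κ})⁺ → (κ+1)²_ρ: for every function f from the unordered pairs of ordinals below (2^{<κ})⁺ to ρ, there is a set H of ordinals below (2^{<κ})⁺ of order type κ+1 and an ordinal α < ρ such that f({x,y}) = α for all x ≠ y in H. -/
/-!
For an ordinal `a`, let `branch f a` be the increasing sequence built greedily below `a`: its
`ξ`-th term is the least `y` above all earlier terms `b β` with `f y (b β) = f a (b β)` for every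
`β < ξ`. It reaches `a` at stage `branchLength f a`, and `a` is determined by this length `ξ`
together with the colours `f a (b β)`, `β < ξ`. If all branches below `(2^{<κ})⁺` had length
`< κ`, there would be at most `κ · sup_{ξ < κ} ρ^|ξ| = 2^{<κ}` ordinals below `(2^{<κ})⁺`; so
some `a` has a branch of length at least `κ`. A branch is end-homogeneous: `f (b γ) (b β)` only
depends on `β` when `β < γ`. By regularity, `κ` many of the first `κ` terms share the colour
`f a (b β) = α`, and these terms together with `a` form a homogeneous set of order type `κ + 1`.
-/

open Cardinal

universe u

noncomputable def setOrderType (H : Set Ordinal.{u}) : Ordinal.{u + 1} :=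
  @Ordinal.type H (Subrel (· < ·) (· ∈ H))
    (inferInstanceAs (IsWellOrder H (Subrel (· < ·) (· ∈ H))))

open Set
open scoped Ordinal

theorem setOrderType_eq_typeLT (s : Set Ordinal.{u}) : setOrderType s = typeLT s := rfl

theorem setOrderType_image_of_strictMonoOn {g : Ordinal.{u} → Ordinal.{u}} {s : Set Ordinal.{u}}
    (hg : StrictMonoOn g s) : setOrderType (g '' s) = setOrderType s :=
  (hg.orderIso g s).symm.ordinalType_congr

theorem setOrderType_insert_of_forall_lt {s : Set Ordinal.{u}} {a : Ordinal.{u}}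
    (h : ∀ x ∈ s, x < a) : setOrderType (insert a s) = setOrderType s + 1 := by
  let e : s ⊕ PUnit.{u + 2} → (insert a s : Set Ordinal.{u}) :=
    Sum.elim (fun x => ⟨x, mem_insert_of_mem a x.2⟩) (fun _ => ⟨a, mem_insert a s⟩)
  have he : ∀ p q, Sum.Lex (· < ·) emptyRelation p q → e p < e q := by
    rintro _ _ (⟨hxy⟩ | ⟨⟨⟩⟩ | ⟨x, _⟩)
    · exact hxy
    · exact h x x.2
  have hsurj : Function.Surjective e := by
    rintro ⟨y, rfl | hy⟩
    · exact ⟨.inr PUnit.unit, rfl⟩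
    · exact ⟨.inl ⟨y, hy⟩, rfl⟩
  rw [setOrderType_eq_typeLT, setOrderType_eq_typeLT,
    ← Ordinal.type_eq_one_of_unique (α := PUnit.{u + 2}) emptyRelation, ← Ordinal.type_sum_lex]
  exact (RelIso.ofSurjective (RelEmbedding.ofMonotone e he) hsurj).ordinalType_congr.symm

theorem setOrderType_le_of_subset {s t : Set Ordinal.{u}} (h : s ⊆ t) :
    setOrderType s ≤ setOrderType t :=
  (Ordinal.type_le_iff').2 ⟨⟨⟨Set.inclusion h, Set.inclusion_injective h⟩, Iff.rfl⟩⟩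

theorem setOrderType_eq_lift_ord {s : Set Ordinal.{u}} {κ : Cardinal.{u}}
    (hs : s ⊆ Iio κ.ord) (hκ : lift.{u + 1} κ ≤ #s) :
    setOrderType s = Ordinal.lift.{u + 1} κ.ord := by
  refine le_antisymm ?_ ?_
  · rw [← Ordinal.type_lt_Iio]
    exact setOrderType_le_of_subset hs
  · rw [lift_ord, ord_le]
    exact hκ


namespace Cardinal

theorem self_le_two_powerlt (κ : Cardinal.{u}) : κ ≤ 2 ^< κ := by
  by_contra! h
  exact (cantor _).not_ge (le_powerlt 2 h)

theorem pow_le_two_powerlt {κ ρ c : Cardinal.{u}} (hκ : ℵ₀ ≤ κ) (hρκ : ρ < κ) (hc : c < κ) :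
    ρ ^ c ≤ 2 ^< κ :=
  calc ρ ^ c ≤ (2 ^ ρ) ^ c := power_le_power_right (cantor ρ).le
    _ = 2 ^ (ρ * c) := (power_mul ..).symm
    _ ≤ 2 ^< κ := le_powerlt 2 (mul_lt_of_lt hκ hρκ hc)

end Cardinal

namespace ErdosRado

section Branch

variable {C : Type*} (f : Ordinal.{u} → Ordinal.{u} → C)

noncomputable def branch (a : Ordinal.{u}) (ξ : Ordinal.{u}) : Ordinal.{u} :=
  sInf {y | ∀ β < ξ, branch a β < y ∧ f y (branch a β) = f a (branch a β)}
termination_by ξ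

def candidates (a ξ : Ordinal.{u}) : Set Ordinal.{u} :=
  {y | ∀ β < ξ, branch f a β < y ∧ f y (branch f a β) = f a (branch f a β)}

theorem branch_eq (a ξ : Ordinal.{u}) : branch f a ξ = sInf (candidates f a ξ) := by
  rw [branch]
  rfl

noncomputable def branchLength (a : Ordinal.{u}) : Ordinal.{u} :=
  sInf {ξ | a ≤ branch f a ξ}

variable {f}

theorem self_mem_candidates {a ξ : Ordinal.{u}} (h : ∀ β < ξ, branch f a β < a) :
    a ∈ candidates f a ξ :=
  fun β hβ => ⟨h β hβ, rfl⟩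

theorem branch_mem_candidates {a ξ : Ordinal.{u}} (h : ∀ β < ξ, branch f a β < a) :
    branch f a ξ ∈ candidates f a ξ := by
  rw [branch_eq]
  exact csInf_mem ⟨a, self_mem_candidates h⟩

theorem branch_le_self {a ξ : Ordinal.{u}} (h : ∀ β < ξ, branch f a β < a) :
    branch f a ξ ≤ a := by
  rw [branch_eq]
  exact csInf_le' (self_mem_candidates h)

theorem exists_self_le_branch (a : Ordinal.{u}) : ∃ ξ, a ≤ branch f a ξ := by
  by_contra! h
  have hmono : StrictMono (branch f a) := fun β ξ hβξ =>
    (branch_mem_candidates (fun γ _ => h γ) β hβξ).1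
  exact (hmono.le_apply.trans_lt (h (Order.succ a))).not_ge (Order.le_succ a)

theorem branch_lt_self {a β : Ordinal.{u}} (h : β < branchLength f a) : branch f a β < a :=
  not_le.1 fun hle => (csInf_le' (s := {ξ | a ≤ branch f a ξ}) hle).not_gt h

theorem branch_branchLength (a : Ordinal.{u}) : branch f a (branchLength f a) = a :=
  (branch_le_self fun _ => branch_lt_self).antisymm (csInf_mem (exists_self_le_branch a))

theorem branch_le_self_of_le {a ξ : Ordinal.{u}} (h : ξ ≤ branchLength f a) :
    branch f a ξ ≤ a :=
  branch_le_self fun _ hβ => branch_lt_self (hβ.trans_le h)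

theorem branch_mem_candidates_of_le {a ξ : Ordinal.{u}} (h : ξ ≤ branchLength f a) :
    branch f a ξ ∈ candidates f a ξ :=
  branch_mem_candidates fun _ hβ => branch_lt_self (hβ.trans_le h)

theorem strictMonoOn_branch (a : Ordinal.{u}) :
    StrictMonoOn (branch f a) (Iic (branchLength f a)) :=
  fun _ _ _ hξ hβξ => (branch_mem_candidates_of_le hξ _ hβξ).1

theorem apply_branch_branch {a β ξ : Ordinal.{u}} (hβξ : β < ξ) (hξ : ξ ≤ branchLength f a) :
    f (branch f a ξ) (branch f a β) = f a (branch f a β) :=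
  (branch_mem_candidates_of_le hξ β hβξ).2

theorem branch_congr {a a' : Ordinal.{u}} (ξ : Ordinal.{u})
    (h : ∀ β < ξ, f a (branch f a β) = f a' (branch f a β)) :
    branch f a ξ = branch f a' ξ := by
  induction ξ using WellFoundedLT.induction with
  | _ ξ IH =>
    have hsame : ∀ β < ξ, branch f a β = branch f a' β := fun β hβ =>
      IH β hβ fun γ hγ => h γ (hγ.trans hβ)
    have hcand : candidates f a ξ = candidates f a' ξ := by
      ext y
      refine forall₂_congr fun β hβ => ?_
      rw [← hsame β hβ, h β hβ]
    rw [branch_eq, branch_eq, hcand]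

theorem eq_of_branchLength_eq {a a' : Ordinal.{u}} (hl : branchLength f a = branchLength f a')
    (h : ∀ β < branchLength f a, f a (branch f a β) = f a' (branch f a' β)) : a = a' := by
  have hsame : ∀ ξ ≤ branchLength f a, branch f a ξ = branch f a' ξ := by
    intro ξ
    induction ξ using WellFoundedLT.induction with
    | _ ξ IH =>
      intro hξ
      refine branch_congr ξ fun β hβ => ?_
      rw [h β (hβ.trans_le hξ), IH β hβ (hβ.le.trans hξ)]
  calc a = branch f a (branchLength f a) := (branch_branchLength a).symm
    _ = branch f a' (branchLength f a') := by rw [hsame _ le_rfl, hl]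
    _ = a' := branch_branchLength a'

theorem pairwise_apply_eq_of_image_insert_branchLength (hsymm : ∀ x y, f x y = f y x)
    {a : Ordinal.{u}} {α : C} {S : Set Ordinal.{u}}
    (hS : ∀ β ∈ S, β < branchLength f a ∧ f a (branch f a β) = α) :
    (branch f a '' insert (branchLength f a) S).Pairwise fun x y => f x y = α := by
  have hT : insert (branchLength f a) S ⊆ Iic (branchLength f a) :=
    insert_subset_iff.2 ⟨self_mem_Iic, fun β hβ => (hS β hβ).1.le⟩
  have hcolor (β) (hβ : β ∈ insert (branchLength f a) S) (γ) (hγ : γ ∈ insert (branchLength f a) S)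
      (hβγ : β < γ) : f (branch f a γ) (branch f a β) = α :=
    (apply_branch_branch hβγ (hT hγ)).trans (hS β (hβ.resolve_left (hβγ.trans_le (hT hγ)).ne)).2
  rintro _ ⟨β, hβ, rfl⟩ _ ⟨γ, hγ, rfl⟩ hne
  rcases lt_trichotomy β γ with hβγ | rfl | hγβ
  · rw [hsymm]
    exact hcolor β hβ γ hγ hβγ
  · exact absurd rfl hne
  · exact hcolor γ hγ β hβ hγβ

end Branch

theorem mk_setOf_branchLength_eq_le {f : Ordinal.{u} → Ordinal.{u} → Ordinal.{u}}
    {A B : Set Ordinal.{u}} (hf : ∀ a ∈ A, ∀ x < a, f a x ∈ B) (ξ : Ordinal.{u}) :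
    #{a ∈ A | branchLength f a = ξ} ≤ #(Iio ξ → B) := by
  refine mk_le_of_injective (f := fun a β => ⟨f a (branch f a β),
    hf a a.2.1 _ (branch_lt_self (β.2.trans_eq a.2.2.symm))⟩) fun a a' he => ?_
  refine Subtype.ext (eq_of_branchLength_eq (a.2.2.trans a'.2.2.symm) fun β hβ => ?_)
  exact congrArg Subtype.val (congrFun he ⟨β, a.2.2 ▸ hβ⟩)

theorem exists_lt_ord_le_branchLength {κ ρ : Cardinal.{u}} (hκ : ℵ₀ ≤ κ) (hρκ : ρ < κ)
    {f : Ordinal.{u} → Ordinal.{u} → Ordinal.{u}}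
    (hf : ∀ a < (Order.succ (2 ^< κ)).ord, ∀ x < a, f a x < ρ.ord) :
    ∃ a < (Order.succ (2 ^< κ)).ord, κ.ord ≤ branchLength f a := by
  set θ := (Order.succ (2 ^< κ)).ord
  by_contra! hshort
  have hcover : Iio θ ⊆ ⋃ ξ : Iio κ.ord, {a ∈ Iio θ | branchLength f a = ξ} := fun a ha =>
    mem_iUnion.2 ⟨⟨_, hshort a ha⟩, ha, rfl⟩
  have hpiece (ξ : Iio κ.ord) :
      #{a ∈ Iio θ | branchLength f a = ξ} ≤ lift.{u + 1} (2 ^< κ) := by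
    refine (mk_setOf_branchLength_eq_le (B := Iio ρ.ord) hf ξ).trans ?_
    rw [← power_def, mk_Iio_ordinal, mk_Iio_ordinal, ← lift_power, card_ord, lift_le]
    exact pow_le_two_powerlt hκ hρκ (lt_ord.1 ξ.2)
  have hsucc : lift.{u + 1} (Order.succ (2 ^< κ)) ≤ lift.{u + 1} (2 ^< κ) := calc
    _ = #(Iio θ) := by rw [mk_Iio_ordinal, card_ord]
    _ ≤ #(Iio κ.ord) * ⨆ ξ : Iio κ.ord, #{a ∈ Iio θ | branchLength f a = ξ} :=
      (mk_le_mk_of_subset hcover).trans (mk_iUnion_le _)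
    _ ≤ lift.{u + 1} κ * lift.{u + 1} (2 ^< κ) := by
      rw [mk_Iio_ordinal, card_ord]
      exact mul_le_mul' le_rfl (ciSup_le' hpiece)
    _ = lift.{u + 1} (2 ^< κ) := by
      rw [← lift_mul, mul_eq_right (hκ.trans (self_le_two_powerlt κ)) (self_le_two_powerlt κ)
        (aleph0_pos.trans_le hκ).ne']
  exact (Order.lt_succ _).not_ge (lift_le.1 hsucc)

theorem exists_lift_le_mk_setOf_eq {κ ρ : Cardinal.{u}} (hκ : κ.IsRegular) (hρκ : ρ < κ)
    {c : Ordinal.{u} → Ordinal.{u}} (hc : ∀ β < κ.ord, c β < ρ.ord) :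
    ∃ α < ρ.ord, lift.{u + 1} κ ≤ #{β | β < κ.ord ∧ c β = α} := by
  obtain ⟨α, hα⟩ := infinite_pigeonhole_card
    (fun β : Iio κ.ord => (⟨c β, hc β β.2⟩ : Iio ρ.ord)) (lift.{u + 1} κ)
    (by rw [mk_Iio_ordinal, card_ord]) (aleph0_le_lift.2 hκ.aleph0_le)
    (by rw [mk_Iio_ordinal, card_ord, (isRegular_lift_iff.2 hκ).cof_ord]; exact lift_lt.2 hρκ)
  refine ⟨α, α.2, hα.trans (mk_le_of_injective
    (f := fun β => ⟨β.1.1, β.1.2, congrArg Subtype.val β.2⟩) fun β γ h => ?_)⟩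
  simpa [Subtype.ext_iff] using h

end ErdosRado

open ErdosRado

theorem erdosRado_general (κ ρ : Cardinal.{u}) (hκ : κ.IsRegular) (hρκ : ρ < κ)
    (f : Ordinal.{u} → Ordinal.{u} → Ordinal.{u})
    (hsymm : ∀ x y, f x y = f y x)
    (hran : ∀ x y, x < (Order.succ (2 ^< κ)).ord → y < (Order.succ (2 ^< κ)).ord →
      f x y < ρ.ord) :
    ∃ H : Set Ordinal.{u}, H ⊆ Set.Iio (Order.succ (2 ^< κ)).ord ∧
      setOrderType H = Ordinal.lift.{u + 1} (κ.ord + 1) ∧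
      ∃ α : Ordinal.{u}, α < ρ.ord ∧ ∀ x ∈ H, ∀ y ∈ H, x ≠ y → f x y = α := by
  obtain ⟨a, ha, hκa⟩ := exists_lt_ord_le_branchLength hκ.aleph0_le hρκ
    fun a ha x hx => hran a x ha (hx.trans ha)
  have hb (β) (hβ : β ≤ branchLength f a) : branch f a β < (Order.succ (2 ^< κ)).ord :=
    (branch_le_self_of_le hβ).trans_lt ha
  obtain ⟨α, hαρ, hS⟩ := exists_lift_le_mk_setOf_eq hκ hρκ (c := fun β => f a (branch f a β))
    fun β hβ => hran _ _ ha (hb β (hβ.le.trans hκa))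
  set S := {β | β < κ.ord ∧ f a (branch f a β) = α}
  have hSlen (β) (hβ : β ∈ S) : β < branchLength f a := hβ.1.trans_le hκa
  have hT : insert (branchLength f a) S ⊆ Iic (branchLength f a) :=
    insert_subset_iff.2 ⟨self_mem_Iic, fun β hβ => (hSlen β hβ).le⟩
  refine ⟨branch f a '' insert (branchLength f a) S, ?_, ?_, α, hαρ,
    pairwise_apply_eq_of_image_insert_branchLength hsymm fun β hβ => ⟨hSlen β hβ, hβ.2⟩⟩
  · rintro _ ⟨β, hβ, rfl⟩
    exact hb β (hT hβ)
  · rw [setOrderType_image_of_strictMonoOn ((strictMonoOn_branch a).mono hT),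
      setOrderType_insert_of_forall_lt hSlen, setOrderType_eq_lift_ord (fun β hβ => hβ.1) hS]
    simp

/-- Erdős–Rado: if `κ` is a regular infinite cardinal and `0 ≠ ρ < κ`, then
`(2^{<κ})⁺ → (κ+1)²_ρ`: for every (symmetric) function `f` on pairs of ordinals below
`(2^{<κ})⁺` with values below `ρ`, there is a set `H` of ordinals below `(2^{<κ})⁺` of
order type `κ+1` and an ordinal `α < ρ` with `f {x,y} = α` for all `x ≠ y` in `H`. -/
theorem erdosRado (κ ρ : Cardinal.{u}) (hκ : κ.IsRegular) (hρ0 : ρ ≠ 0) (hρκ : ρ < κ)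
    (f : Ordinal.{u} → Ordinal.{u} → Ordinal.{u})
    (hsymm : ∀ x y, f x y = f y x)
    (hran : ∀ x y, x < (Order.succ (2 ^< κ)).ord → y < (Order.succ (2 ^< κ)).ord →
      f x y < ρ.ord) :
    ∃ H : Set Ordinal.{u}, H ⊆ Set.Iio (Order.succ (2 ^< κ)).ord ∧
      setOrderType H = Ordinal.lift.{u + 1} (κ.ord + 1) ∧
      ∃ α : Ordinal.{u}, α < ρ.ord ∧ ∀ x ∈ H, ∀ y ∈ H, x ≠ y → f x y = α :=
  erdosRado_general κ ρ hκ hρκ f hsymm hran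
end

section
/- Let κ be a regular infinite cardinal and let λ be a cardinal with λ^{<κ} = λ. Then for every function f from the unordered pairs of ordinals below λ⁺ to λ, there is a strictly increasing sequence of ordinals ⟨α_i : i ≤ κ⟩ below λ⁺ such that, setting δ = α_κ, f({α_i, α_j}) = f({α_i, δ}) for all i < j < κ. -/
/-!
Consider the Erdős–Rado tree: a colour sequence `s` of length `i` determines the node obtained by
choosing, at every stage, the least ordinal above the earlier nodes that realises the prescribed
colours with them. Since `λ^{<κ} = λ`, the tree has at most `λ` nodes of height below `κ`, so some
`δ < λ⁺` lies above all of them. Running the same greedy construction towards `δ`, i.e. with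
colours `f {x, δ}`, always has `δ` itself as a candidate; hence it never stops before `κ`, and each
point it picks is a node of the tree, so lies below `δ`.
-/

open Cardinal Set

universe u

namespace Cardinal

theorem le_of_powerlt_eq_self {κ lam : Cardinal.{u}} (h2 : 2 ≤ lam) (h : lam ^< κ = lam) :
    κ ≤ lam := by
  by_contra! hlt
  exact (cantor lam).not_ge ((power_le_power_right h2).trans ((le_powerlt lam hlt).trans_eq h))

theorem mk_sigma_Iio_ord_le (κ μ : Cardinal.{u}) :
    #(Σ i : Iio κ.ord, Iio i.1 → Iio μ.ord) ≤ lift.{u + 1} (κ * μ ^< κ) := by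
  rw [mk_sigma, lift_mul]
  calc (sum fun i : Iio κ.ord => #(Iio i.1 → Iio μ.ord))
      ≤ sum fun _ : Iio κ.ord => lift.{u + 1} (μ ^< κ) := sum_le_sum _ _ fun i => by
        rw [← power_def, mk_Iio_ordinal, mk_Iio_ordinal, card_ord, ← lift_power, lift_le]
        exact le_powerlt μ (lt_ord.mp i.2)
    _ = lift.{u + 1} κ * lift.{u + 1} (μ ^< κ) := by rw [sum_const', mk_Iio_ordinal, card_ord]

end Cardinal

namespace ErdosRado

variable (f : Ordinal.{u} → Ordinal.{u} → Ordinal.{u}) (o : Ordinal.{u})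

/-- At stage `i`, the least `β < o` above all earlier points `x j` with `f (x j) β = c j (x j)`,
and `0` if there is none. Colours `c j _ = s j` give the node of the Erdős–Rado tree along `s`;
colours `c _ x = f x δ` give the path towards `δ`. -/
noncomputable def greedyBranch (c : Ordinal.{u} → Ordinal.{u} → Ordinal.{u}) (i : Ordinal.{u}) :
    Ordinal.{u} :=
  sInf {β | β < o ∧ ∀ j < i,
    greedyBranch c j < β ∧ f (greedyBranch c j) β = c j (greedyBranch c j)}
termination_by i
decreasing_by assumption

noncomputable def pathTowards (δ : Ordinal.{u}) : Ordinal.{u} → Ordinal.{u} :=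
  greedyBranch f o fun _ x => f x δ

def treeNodes (θ μ : Ordinal.{u}) : Set Ordinal.{u} :=
  {x | ∃ i < θ, ∃ s : Ordinal.{u} → Ordinal.{u}, (∀ j < i, s j < μ) ∧
    greedyBranch f o (fun j _ => s j) i = x}

variable {f o}

theorem greedyBranch_lt (ho : 0 < o) (c : Ordinal.{u} → Ordinal.{u} → Ordinal.{u})
    (i : Ordinal.{u}) : greedyBranch f o c i < o := by
  have hsInf (S : Set Ordinal.{u}) (hS : ∀ β ∈ S, β < o) : sInf S < o :=
    S.eq_empty_or_nonempty.elim (fun h => h ▸ Ordinal.sInf_empty ▸ ho) fun h => hS _ (csInf_mem h)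
  rw [greedyBranch]
  exact hsInf _ fun _ hβ => hβ.1

theorem greedyBranch_mem {c : Ordinal.{u} → Ordinal.{u} → Ordinal.{u}} {i β : Ordinal.{u}}
    (hβ : β < o) (h : ∀ j < i, greedyBranch f o c j < β ∧
      f (greedyBranch f o c j) β = c j (greedyBranch f o c j)) :
    greedyBranch f o c i < o ∧ ∀ j < i, greedyBranch f o c j < greedyBranch f o c i ∧
      f (greedyBranch f o c j) (greedyBranch f o c i) = c j (greedyBranch f o c j) := by
  have hne : {β | β < o ∧ ∀ j < i, greedyBranch f o c j < β ∧
      f (greedyBranch f o c j) β = c j (greedyBranch f o c j)}.Nonempty := ⟨β, hβ, h⟩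
  rw [greedyBranch]
  exact csInf_mem hne

theorem greedyBranch_congr {c c' : Ordinal.{u} → Ordinal.{u} → Ordinal.{u}} {i : Ordinal.{u}}
    (h : ∀ j < i, c j (greedyBranch f o c j) = c' j (greedyBranch f o c j)) :
    greedyBranch f o c i = greedyBranch f o c' i := by
  induction i using WellFoundedLT.induction with
  | _ i IH =>
    have hprev : ∀ j < i, greedyBranch f o c j = greedyBranch f o c' j :=
      fun j hj => IH j hj fun k hk => h k (hk.trans hj)
    rw [greedyBranch, greedyBranch]
    congr 1
    ext β
    refine and_congr_right fun _ => forall₂_congr fun j hj => ?_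
    rw [← hprev j hj, h j hj]

theorem mk_treeNodes_le (θ μ : Ordinal.{u}) :
    #(treeNodes f o θ μ) ≤ #(Σ i : Iio θ, Iio i.1 → Iio μ) := by
  refine (mk_le_mk_of_subset ?_).trans (mk_range_le (f := fun p : Σ i : Iio θ, Iio i.1 → Iio μ =>
    greedyBranch f o (fun j _ => if h : j < p.1 then (p.2 ⟨j, h⟩ : Ordinal) else 0) p.1))
  rintro _ ⟨i, hi, s, hs, rfl⟩
  refine ⟨⟨⟨i, hi⟩, fun j => ⟨s j, hs j j.2⟩⟩, greedyBranch_congr fun j hj => ?_⟩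
  simp [hj]

theorem pathTowards_endHomogeneous {θ μ δ : Ordinal.{u}} (hδ : δ < o)
    (hfδ : ∀ x < o, f x δ < μ) (hnodes : ∀ x ∈ treeNodes f o θ μ, x < δ) :
    ∀ i < θ, pathTowards f o δ i < δ ∧ ∀ j < i, pathTowards f o δ j < pathTowards f o δ i ∧
      f (pathTowards f o δ j) (pathTowards f o δ i) = f (pathTowards f o δ j) δ := by
  intro i
  induction i using WellFoundedLT.induction with
  | _ i IH =>
    intro hi
    set x := pathTowards f o δ
    have hprev : ∀ j < i, x j < δ := fun j hj => (IH j hj (hj.trans hi)).1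
    have hnode : x i ∈ treeNodes f o θ μ :=
      ⟨i, hi, fun j => f (x j) δ, fun j hj => hfδ _ ((hprev j hj).trans hδ),
        Eq.symm <| greedyBranch_congr fun _ _ => rfl⟩
    exact ⟨hnodes _ hnode, (greedyBranch_mem hδ fun j hj => ⟨hprev j hj, rfl⟩).2⟩

theorem exists_endHomogeneous {Λ : Cardinal.{u}} (hΛ : Λ.IsRegular) {θ μ : Ordinal.{u}}
    (hcard : #(Σ i : Iio θ, Iio i.1 → Iio μ) < lift.{u + 1} Λ)
    (hf : ∀ x y, x < Λ.ord → y < Λ.ord → f x y < μ) :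
    ∃ δ < Λ.ord, ∀ i < θ, pathTowards f Λ.ord δ i < δ ∧
      ∀ j < i, pathTowards f Λ.ord δ j < pathTowards f Λ.ord δ i ∧
        f (pathTowards f Λ.ord δ j) (pathTowards f Λ.ord δ i) = f (pathTowards f Λ.ord δ j) δ := by
  have hlim : Order.IsSuccLimit Λ.ord := isSuccLimit_ord hΛ.aleph0_le
  have hnodes : ∀ x ∈ treeNodes f Λ.ord θ μ, x < Λ.ord := by
    rintro _ ⟨i, -, s, -, rfl⟩
    exact greedyBranch_lt hlim.bot_lt _ _
  have hsup : sSup (treeNodes f Λ.ord θ μ) < Λ.ord := by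
    refine Ordinal.sSup_lt_of_lt_cof ?_ hnodes
    rw [← Ordinal.lift_cof, hΛ.cof_ord]
    exact (mk_treeNodes_le θ μ).trans_lt hcard
  have hδ : Order.succ (sSup (treeNodes f Λ.ord θ μ)) < Λ.ord := hlim.succ_lt hsup
  refine ⟨_, hδ, pathTowards_endHomogeneous hδ (fun x hx => hf x _ hx hδ) fun x hx => ?_⟩
  exact Order.lt_succ_iff.mpr (le_csSup ⟨Λ.ord, fun y hy => (hnodes y hy).le⟩ hx)

end ErdosRado

open ErdosRado

theorem erdosRado_endHomogeneous_general (κ lam : Cardinal.{u})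
    (hlam : ℵ₀ ≤ lam) (hpow : lam ^< κ = lam)
    (f : Ordinal.{u} → Ordinal.{u} → Ordinal.{u})
    (hran : ∀ x y, x < (Order.succ lam).ord → y < (Order.succ lam).ord →
      f x y < lam.ord) :
    ∃ α : Ordinal.{u} → Ordinal.{u},
      (∀ i j, i < j → j ≤ κ.ord → α i < α j) ∧
      (∀ i, i ≤ κ.ord → α i < (Order.succ lam).ord) ∧
      ∀ i j, i < j → j < κ.ord → f (α i) (α j) = f (α i) (α κ.ord) := by
  have hκ : κ ≤ lam := le_of_powerlt_eq_self (ofNat_le_aleph0.trans hlam) hpow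
  have hcard : #(Σ i : Iio κ.ord, Iio i.1 → Iio lam.ord) < lift.{u + 1} (Order.succ lam) :=
    calc _ ≤ lift.{u + 1} (κ * lam ^< κ) := mk_sigma_Iio_ord_le κ lam
      _ ≤ lift.{u + 1} lam := lift_le.mpr <| by rw [hpow]; exact mul_le_of_le hlam hκ le_rfl
      _ < lift.{u + 1} (Order.succ lam) := lift_lt.mpr (Order.lt_succ lam)
  obtain ⟨δ, hδ, hpath⟩ := exists_endHomogeneous (isRegular_succ hlam) hcard hran
  refine ⟨Function.update (pathTowards f (Order.succ lam).ord δ) κ.ord δ,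
    fun i j hij hj => ?_, fun i hi => ?_, fun i j hij hj => ?_⟩
  · rcases hj.lt_or_eq with hj | rfl
    · rw [Function.update_of_ne (hij.trans hj).ne, Function.update_of_ne hj.ne]
      exact ((hpath j hj).2 i hij).1
    · rw [Function.update_of_ne hij.ne, Function.update_self]
      exact (hpath i hij).1
  · rcases hi.lt_or_eq with hi | rfl
    · rw [Function.update_of_ne hi.ne]
      exact (hpath i hi).1.trans hδ
    · rwa [Function.update_self]
  · rw [Function.update_of_ne (hij.trans hj).ne, Function.update_of_ne hj.ne,
      Function.update_self]
    exact ((hpath j hj).2 i hij).2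

/-- If `κ` is a regular infinite cardinal and `λ` an infinite cardinal with `λ^{<κ} = λ`,
then for every (symmetric) function `f` on pairs of ordinals below `λ⁺` with values
below `λ`, there is a strictly increasing sequence `⟨α_i : i ≤ κ⟩` of ordinals below `λ⁺`
such that, setting `δ = α_κ`, `f {α_i, α_j} = f {α_i, δ}` for all `i < j < κ`. -/
theorem erdosRado_endHomogeneous (κ lam : Cardinal.{u}) (hκ : κ.IsRegular)
    (hlam : ℵ₀ ≤ lam) (hpow : lam ^< κ = lam)
    (f : Ordinal.{u} → Ordinal.{u} → Ordinal.{u})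
    (hsymm : ∀ x y, f x y = f y x)
    (hran : ∀ x y, x < (Order.succ lam).ord → y < (Order.succ lam).ord →
      f x y < lam.ord) :
    ∃ α : Ordinal.{u} → Ordinal.{u},
      (∀ i j, i < j → j ≤ κ.ord → α i < α j) ∧
      (∀ i, i ≤ κ.ord → α i < (Order.succ lam).ord) ∧
      ∀ i j, i < j → j < κ.ord → f (α i) (α j) = f (α i) (α κ.ord) :=
  erdosRado_endHomogeneous_general κ lam hlam hpow f hran
end

section
/- Suppose ⟨λ_i⟩_{i∈I} ↠ ⟨κ_i⟩_{i∈I}, and j ∈ I is an index such that λ_j is the maximum of ⟨λ_i⟩_{i∈I} and κ_j is the maximum of ⟨κ_i⟩_{i∈I}. Let λ′ be a cardinal with λ′ > λ_j and let κ′ be a cardinal with sup_{i≠j} κ_i ≤ κ′ < κ_j. Then the sequences obtained by replacing the j-th entries, namely {(j,λ′)} ∪ ⟨λ_i⟩_{i≠j} and {(j,κ′)} ∪ ⟨κ_i⟩_{i≠j}, satisfy {(j,λ′)} ∪ ⟨λ_i⟩_{i≠j} ↠ {(j,κ′)} ∪ ⟨κ_i⟩_{i≠j}. -/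
/-!
Write `Λ = λ_j`. Given `f` on `λ′`, the closure `Y` of `Λ` under `f` still has size `λ_j`.
Transporting `f` to `Λ` along a bijection `e : Λ ≃ Y`, and adding `e⁻¹` and `e` (truncated
below `Λ`) as further operations, the Chang property of `⟨λ_i⟩` yields `X₀ ⊆ Λ` whose image
`X = e '' X₀ ⊆ Y` is closed under `f` and agrees with `X₀` below `Λ`. Cutting `X` at its
`κ′`-th element and closing under `f` again gives a set of size `κ′` whose traces on the
`λ_i`, `i ≠ j`, still have size `κ_i`: a trace either is unaffected by the cut or already
contains the whole cut, and then `κ′ ≤ κ_i ≤ κ′`.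
-/

open Cardinal

universe u

/-- `⟨λ_i⟩_{i∈I} ↠ ⟨κ_i⟩_{i∈I}`: letting `λ = sup_{i∈I} λ_i` (cardinals identified with
their initial ordinals), for every `f : λ^{<ω} → λ` there is `X ⊆ λ` with
`f''(X^{<ω}) ⊆ X` such that `|X ∩ λ_i| = κ_i` for every `i ∈ I`. -/
def ChangSeq {I : Type u} (lam kap : I → Cardinal.{u}) : Prop :=
  ∀ f : List Ordinal.{u} → Ordinal.{u},
    (∀ l : List Ordinal.{u}, (∀ x ∈ l, x < (⨆ i, lam i).ord) → f l < (⨆ i, lam i).ord) →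
    ∃ X : Set Ordinal.{u}, X ⊆ Set.Iio (⨆ i, lam i).ord ∧
      (∀ l : List Ordinal.{u}, (∀ x ∈ l, x ∈ X) → f l ∈ X) ∧
      ∀ i, #(↥(X ∩ Set.Iio (lam i).ord)) = Cardinal.lift.{u + 1} (kap i)

open Set

universe v

section ListClosure

variable {α : Type v}

def IsListClosed (f : List α → α) (s : Set α) : Prop :=
  ∀ l : List α, (∀ x ∈ l, x ∈ s) → f l ∈ s

def listClosureStep (f : List α → α) (s : Set α) : Set α :=
  s ∪ range fun l : List s => f (l.map (↑))

def listClosure (f : List α → α) (s : Set α) : Set α :=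
  ⋃ n, (listClosureStep f)^[n] s

variable {f : List α → α}

lemma monotone_iterate_listClosureStep (s : Set α) :
    Monotone fun n => (listClosureStep f)^[n] s :=
  monotone_nat_of_le_succ fun n => by
    rw [Function.iterate_succ_apply']
    exact subset_union_left

lemma subset_listClosure (s : Set α) : s ⊆ listClosure f s :=
  subset_iUnion (fun n => (listClosureStep f)^[n] s) 0

lemma listClosure_subset {s t : Set α} (hst : s ⊆ t) (ht : IsListClosed f t) :
    listClosure f s ⊆ t := by
  refine iUnion_subset fun n => ?_
  induction n with
  | zero => exact hst
  | succ n ih =>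
    rw [Function.iterate_succ_apply']
    rintro _ (hx | ⟨l, rfl⟩)
    · exact ih hx
    · refine ht _ fun x hx => ?_
      obtain ⟨y, -, rfl⟩ := List.mem_map.1 hx
      exact ih y.2

lemma isListClosed_listClosure (s : Set α) : IsListClosed f (listClosure f s) := by
  intro l hl
  obtain ⟨n, hn⟩ : ∃ n, ∀ x ∈ l, x ∈ (listClosureStep f)^[n] s := by
    induction l with
    | nil => exact ⟨0, by simp⟩
    | cons a l ih =>
      obtain ⟨n, hn⟩ := ih fun x hx => hl x (List.mem_cons_of_mem a hx)
      obtain ⟨m, hm⟩ := mem_iUnion.1 (hl a List.mem_cons_self)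
      refine ⟨max n m, List.forall_mem_cons.2 ⟨?_, fun x hx => ?_⟩⟩
      · exact monotone_iterate_listClosureStep s (le_max_right n m) hm
      · exact monotone_iterate_listClosureStep s (le_max_left n m) (hn x hx)
  have hl' : l ∈ {l | ∀ x ∈ l, x ∈ (listClosureStep f)^[n] s} := hn
  rw [← range_list_map_coe] at hl'
  obtain ⟨l', rfl⟩ := hl'
  refine mem_iUnion.2 ⟨n + 1, ?_⟩
  rw [Function.iterate_succ_apply']
  exact Or.inr ⟨l', rfl⟩

lemma mk_listClosureStep_le {s : Set α} (hs : ℵ₀ ≤ #s) : #(listClosureStep f s) ≤ #s := by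
  have : Infinite s := Cardinal.infinite_iff.2 hs
  calc #(listClosureStep f s) ≤ #s + #(List s) :=
        (mk_union_le _ _).trans (add_le_add le_rfl mk_range_le)
    _ = #s := by rw [mk_list_eq_mk, add_eq_self hs]

lemma mk_listClosure {s : Set α} (hs : ℵ₀ ≤ #s) : #(listClosure f s) = #s := by
  have hiter : ∀ n, #((listClosureStep f)^[n] s) ≤ #s := by
    intro n
    induction n with
    | zero => exact le_rfl
    | succ n ih =>
      rw [Function.iterate_succ_apply']
      refine (mk_listClosureStep_le (hs.trans ?_)).trans ih
      exact mk_le_mk_of_subset (monotone_iterate_listClosureStep s n.zero_le)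
  refine le_antisymm ?_ (mk_le_mk_of_subset (subset_listClosure s))
  have := mk_iUnion_le_lift.{v, 0} fun n => (listClosureStep f)^[n] s
  simp only [lift_uzero, mk_nat, lift_aleph0] at this
  calc #(listClosure f s) ≤ ℵ₀ * ⨆ n, #((listClosureStep f)^[n] s) := this
    _ ≤ ℵ₀ * #s := by gcongr; exact ciSup_le' hiter
    _ = #s := aleph0_mul_eq hs

end ListClosure

section WellOrder

variable {β : Type v} [LinearOrder β] [WellFoundedLT β]

lemma exists_mk_Iio_eq {κ : Cardinal.{v}} (h : κ < #β) : ∃ x : β, #(Iio x) = κ := by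
  have hκ : κ.ord < Ordinal.type (α := β) (· < ·) := by
    refine (ord_lt_ord.2 h).trans_le ?_
    rw [← Ordinal.card_type (α := β) (· < ·)]
    exact ord_card_le _
  refine ⟨Ordinal.enum (α := β) (· < ·) ⟨κ.ord, hκ⟩, ?_⟩
  calc #(Iio _) = (Ordinal.typein (α := β) (· < ·) _).card := rfl
    _ = κ := by rw [Ordinal.typein_enum, card_ord]

lemma exists_mem_mk_inter_Iio_eq {s : Set β} {κ : Cardinal.{v}} (h : κ < #s) :
    ∃ x ∈ s, #(s ∩ Iio x : Set β) = κ := by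
  obtain ⟨⟨x, hxs⟩, hx⟩ := exists_mk_Iio_eq h
  refine ⟨x, hxs, ?_⟩
  have himage : Subtype.val '' Iio ⟨x, hxs⟩ = s ∩ Iio x := by
    ext y
    simp [and_comm]
  rw [← hx, ← mk_image_eq Subtype.val_injective, himage]

lemma IsListClosed.exists_subset_mk_eq {f : List β → β} {X : Set β} (hX : IsListClosed f X)
    {κ : Cardinal.{v}} (hκ : ℵ₀ ≤ κ) (hκX : κ < #X) {ι : Type*} (a : ι → β)
    (k : ι → Cardinal.{v}) (hk : ∀ i, k i ≤ κ) (hXa : ∀ i, #(X ∩ Iio (a i) : Set β) = k i) :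
    ∃ X' ⊆ X, IsListClosed f X' ∧ #X' = κ ∧ ∀ i, #(X' ∩ Iio (a i) : Set β) = k i := by
  obtain ⟨x, -, hx⟩ := exists_mem_mk_inter_Iio_eq hκX
  set Z := X ∩ Iio x
  have hZa : ∀ i, #(Z ∩ Iio (a i) : Set β) = k i := by
    intro i
    rcases le_or_gt (a i) x with hax | hxa
    · rw [inter_assoc, Iio_inter_Iio, min_eq_right hax]
      exact hXa i
    · rw [inter_eq_left.2 fun y hy => hy.2.trans hxa, hx]
      refine le_antisymm ?_ (hk i)
      rw [← hx, ← hXa i]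
      exact mk_le_mk_of_subset (inter_subset_inter_right X (Iio_subset_Iio hxa.le))
  have hZX : listClosure f Z ⊆ X := listClosure_subset inter_subset_left hX
  refine ⟨listClosure f Z, hZX, isListClosed_listClosure Z,
    by rw [mk_listClosure (hx ▸ hκ), hx], fun i => le_antisymm ?_ ?_⟩
  · rw [← hXa i]
    exact mk_le_mk_of_subset (inter_subset_inter_left _ hZX)
  · rw [← hZa i]
    exact mk_le_mk_of_subset (inter_subset_inter_left _ (subset_listClosure Z))

end WellOrder

section Transport

variable {α : Type v}

lemma exists_partialEquiv_of_mk_eq [Nonempty α] {s t : Set α} (h : #s = #t) :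
    ∃ e : PartialEquiv α α, e.source = s ∧ e.target = t := by
  classical
  obtain ⟨φ⟩ := Cardinal.eq.1 h
  let g : α → α := fun x => if hx : x ∈ s then φ ⟨x, hx⟩ else x
  have hg : ∀ x : s, g x = φ x := fun x => dif_pos x.2
  have hbij : BijOn g s t := by
    refine ⟨fun x hx => hg ⟨x, hx⟩ ▸ (φ _).2, fun x hx y hy hxy => ?_, fun y hy => ?_⟩
    · rw [hg ⟨x, hx⟩, hg ⟨y, hy⟩] at hxy
      exact congrArg Subtype.val (φ.injective (Subtype.ext hxy))
    · exact ⟨φ.symm ⟨y, hy⟩, (φ.symm _).2, by rw [hg, Equiv.apply_symm_apply]⟩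
  exact ⟨hbij.toPartialEquiv g s t, rfl, rfl⟩

variable {f : List α → α} {e : PartialEquiv α α} {X : Set α}

lemma IsListClosed.image_partialEquiv (hf : IsListClosed f e.target) (hXs : X ⊆ e.source)
    (hX : IsListClosed (fun l => e.symm (f (l.map e))) X) : IsListClosed f (e '' X) := by
  intro l hl
  have hlt : ∀ y ∈ l, y ∈ e.target := fun y hy => by
    obtain ⟨x, hx, rfl⟩ := hl y hy
    exact e.map_source (hXs hx)
  have hl' : ∀ x ∈ l.map e.symm, x ∈ X := by
    simp only [List.mem_map]
    rintro _ ⟨y, hy, rfl⟩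
    obtain ⟨x, hx, rfl⟩ := hl y hy
    rwa [e.left_inv (hXs hx)]
  have hmap : (l.map e.symm).map e = l := by
    rw [List.map_map]
    exact (List.map_congr_left fun y hy => e.right_inv (hlt y hy)).trans (List.map_id l)
  refine ⟨_, hX _ hl', ?_⟩
  simp only [hmap]
  exact e.right_inv (hf l hlt)

lemma PartialEquiv.image_inter_source_eq (hst : e.source ⊆ e.target) (hXs : X ⊆ e.source)
    (hsymm : MapsTo e.symm X X) (he : ∀ x ∈ X, e x ∈ e.source → e x ∈ X) :
    e '' X ∩ e.source = X := by
  ext y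
  constructor
  · rintro ⟨⟨x, hx, rfl⟩, hy⟩
    exact he x hx hy
  · intro hy
    exact ⟨⟨e.symm y, hsymm hy, e.right_inv (hst (hXs hy))⟩, hXs hy⟩

end Transport

section CombineOps

variable {α : Type v} [Inhabited α]

-- One operation coding three: `l ++ l ++ l ↦ g l`, `[x] ↦ u x`, `[x, x] ↦ v x`.
def combineOps (g : List α → α) (u v : α → α) (l : List α) : α :=
  if l.length % 3 = 0 then g (l.take (l.length / 3))
  else if l.length % 3 = 1 then u l.headI else v l.headI

lemma isListClosed_combineOps_iff {g : List α → α} {u v : α → α} {s : Set α} :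
    IsListClosed (combineOps g u v) s ↔ IsListClosed g s ∧ MapsTo u s s ∧ MapsTo v s s := by
  constructor
  · intro h
    refine ⟨fun l hl => ?_, fun x hx => ?_, fun x hx => ?_⟩
    · have hlen : (l ++ l ++ l).length = 3 * l.length := by
        simp only [List.length_append]
        ring
      have := h (l ++ l ++ l) (by simpa [or_assoc] using hl)
      rwa [combineOps, hlen, if_pos (Nat.mul_mod_right 3 _), Nat.mul_div_cancel_left _ three_pos,
        List.append_assoc, List.take_left] at this
    · simpa [combineOps] using h [x] (by simpa using hx)
    · simpa [combineOps] using h [x, x] (by simpa using hx)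
  · rintro ⟨hg, hu, hv⟩ l hl
    rcases l with _ | ⟨a, t⟩
    · simpa [combineOps] using hg [] (by simp)
    · have ha := hl a List.mem_cons_self
      unfold combineOps
      split_ifs
      exacts [hg _ fun x hx => hl x (List.mem_of_mem_take hx), hu ha, hv ha]

end CombineOps

lemma iSup_update_eq_of_forall_le {I : Type u} [DecidableEq I] {lam : I → Cardinal.{u}} {j : I}
    {c : Cardinal.{u}} (h : ∀ i, lam i ≤ c) : ⨆ i, Function.update lam j c i = c := by
  refine le_antisymm (ciSup_le' fun i => ?_) ?_
  · rcases eq_or_ne i j with rfl | hij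
    · rw [Function.update_self]
    · rw [Function.update_of_ne hij]
      exact h i
  · simpa using le_ciSup (bddAbove_of_small (s := range (Function.update lam j c))) j

lemma ChangSeq.exists_isListClosed_subset {I : Type u} {lam kap : I → Cardinal.{u}}
    (h : ChangSeq lam kap) {Y : Set Ordinal.{u}} (hY : Iio (⨆ i, lam i).ord ⊆ Y)
    (hYmk : #Y = #(Iio (⨆ i, lam i).ord)) {f : List Ordinal.{u} → Ordinal.{u}}
    (hf : IsListClosed f Y) :
    ∃ X ⊆ Y, IsListClosed f X ∧ ∀ i, #(X ∩ Iio (lam i).ord : Set _) = lift.{u + 1} (kap i) := by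
  set Λ := (⨆ i, lam i).ord
  obtain ⟨e, hes, rfl⟩ := exists_partialEquiv_of_mk_eq hYmk.symm
  let v x := if e x < Λ then e x else x
  have hcomb : IsListClosed (combineOps (fun l => e.symm (f (l.map e))) e.symm v) (Iio Λ) := by
    rw [← hes] at hY ⊢
    refine isListClosed_combineOps_iff.2 ⟨fun l hl => ?_, fun x hx => ?_, fun x hx => ?_⟩
    · refine e.map_target (hf _ fun y hy => ?_)
      obtain ⟨x, hx, rfl⟩ := List.mem_map.1 hy
      exact e.map_source (hl x hx)
    · exact e.map_target (hY hx)
    · simp only [v, hes] at hx ⊢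
      split_ifs with hlt
      exacts [hlt, hx]
  obtain ⟨X₀, hX₀Λ, hX₀H, hX₀card⟩ := h _ hcomb
  obtain ⟨hg, hu, hv⟩ := isListClosed_combineOps_iff.1 hX₀H
  rw [← hes] at hX₀Λ hY
  have hcap : e '' X₀ ∩ Iio Λ = X₀ := by
    refine hes ▸ e.image_inter_source_eq hY hX₀Λ hu fun x hx hex => ?_
    have hlt : e x < Λ := (hes ▸ hex : e x ∈ Iio Λ)
    simpa only [v, if_pos hlt] using hv hx
  refine ⟨e '' X₀, (e.mapsTo.mono_left hX₀Λ).image_subset, hf.image_partialEquiv hX₀Λ hg,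
    fun i => ?_⟩
  have hi : Iio (lam i).ord ⊆ Iio Λ :=
    Iio_subset_Iio (ord_le_ord.2 (le_ciSup bddAbove_of_small i))
  calc #(e '' X₀ ∩ Iio (lam i).ord : Set _) = #(e '' X₀ ∩ Iio Λ ∩ Iio (lam i).ord : Set _) := by
        rw [inter_assoc, inter_eq_right.2 hi]
    _ = lift (kap i) := by rw [hcap, hX₀card i]

theorem changSeq_replace_max_general {I : Type u} [DecidableEq I] (lam kap : I → Cardinal.{u})
    (hlam : ∀ i, ℵ₀ ≤ lam i)
    (h : ChangSeq lam kap) (j : I)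
    (hlmax : ∀ i, lam i ≤ lam j)
    (lam' kap' : Cardinal.{u}) (hkap' : ℵ₀ ≤ kap')
    (hl' : lam j < lam') (hk'le : ∀ i, i ≠ j → kap i ≤ kap') (hk'lt : kap' < kap j) :
    ChangSeq (Function.update lam j lam') (Function.update kap j kap') := by
  have hsup : ⨆ i, lam i = lam j := le_antisymm (ciSup_le' hlmax) (le_ciSup bddAbove_of_small j)
  rw [ChangSeq, iSup_update_eq_of_forall_le fun i => (hlmax i).trans hl'.le]
  intro f hf
  set Y := listClosure f (Iio (⨆ i, lam i).ord)
  have hYmk : #Y = #(Iio (⨆ i, lam i).ord) := mk_listClosure <| by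
    rw [mk_Iio_ordinal, card_ord, hsup]
    exact aleph0_le_lift.2 (hlam j)
  have hY : Y ⊆ Iio lam'.ord :=
    listClosure_subset (Iio_subset_Iio (ord_le_ord.2 (hsup ▸ hl'.le))) hf
  obtain ⟨X, hXY, hXf, hXcard⟩ :=
    h.exists_isListClosed_subset (subset_listClosure _) hYmk (isListClosed_listClosure _)
  have hκX : lift kap' < #X := calc
    lift kap' < lift (kap j) := lift_lt.2 hk'lt
    _ = #(X ∩ Iio (lam j).ord : Set _) := (hXcard j).symm
    _ ≤ #X := mk_le_mk_of_subset inter_subset_left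
  obtain ⟨X', hX'X, hX'f, hX'mk, hX'card⟩ := hXf.exists_subset_mk_eq (aleph0_le_lift.2 hkap') hκX
    (fun i : {i // i ≠ j} => (lam i).ord) (fun i => lift (kap i)) (fun i => lift_le.2 (hk'le i i.2))
    (fun i => hXcard i)
  have hX'sub : X' ⊆ Iio lam'.ord := (hX'X.trans hXY).trans hY
  refine ⟨X', hX'sub, hX'f, fun i => ?_⟩
  rcases eq_or_ne i j with rfl | hij
  · simp [inter_eq_left.2 hX'sub, hX'mk]
  · simpa [hij] using hX'card ⟨i, hij⟩

/-- If `⟨λ_i⟩ ↠ ⟨κ_i⟩`, `λ_j` and `κ_j` are the maxima of the respective sequences,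
`λ′ > λ_j`, and `sup_{i≠j} κ_i ≤ κ′ < κ_j`, then the sequences obtained by replacing the
`j`-th entries by `λ′` and `κ′` respectively again satisfy the Chang relation. -/
theorem changSeq_replace_max {I : Type u} [DecidableEq I] (lam kap : I → Cardinal.{u})
    (hlam : ∀ i, ℵ₀ ≤ lam i) (hkap : ∀ i, ℵ₀ ≤ kap i)
    (h : ChangSeq lam kap) (j : I)
    (hlmax : ∀ i, lam i ≤ lam j) (hkmax : ∀ i, kap i ≤ kap j)
    (lam' kap' : Cardinal.{u}) (hkap' : ℵ₀ ≤ kap')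
    (hl' : lam j < lam') (hk'le : ∀ i, i ≠ j → kap i ≤ kap') (hk'lt : kap' < kap j) :
    ChangSeq (Function.update lam j lam') (Function.update kap j kap') :=
  changSeq_replace_max_general lam kap hlam h j hlmax lam' kap' hkap' hl' hk'le hk'lt
end

section
/- Let λ1 ≥ λ0 and κ1 ≥ κ0 be infinite cardinals and ξ an ordinal. Suppose either λ0 = κ0^{+ξ}, or there is a cardinal λ ≤ λ0 such that λ0 = λ^{+ξ} and λ^{κ0} ≤ λ0. If (λ1,λ0) ↠_ξ (κ1,κ0), then (λ1,λ0) ↠_{κ0} (κ1,κ0). -/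
open Cardinal

universe u

/-- The `ξ`-th iterated cardinal successor `κ^{+ξ}`: `κ^{+0} = κ`,
`κ^{+(ξ+1)} = (κ^{+ξ})⁺`, and `κ^{+ξ} = sup_{η<ξ} κ^{+η}` for limit `ξ`. -/
noncomputable def iterSucc (κ : Cardinal.{u}) (ξ : Ordinal.{u}) : Cardinal.{u} :=
  Ordinal.limitRecOn ξ κ (fun _ ih => Order.succ ih)
    (fun o _ ih => ⨆ η : Set.Iio o, ih η.1 η.2)

/-- `(λ1,λ0) ↠_ξ (κ1,κ0)`: identifying cardinals with their initial ordinals, for every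
`f : λ1^{<ω} → λ1` there is `X ⊆ λ1` of cardinality `κ1` with `f''(X^{<ω}) ⊆ X`,
`|X ∩ λ0| = κ0`, and `ξ ⊆ X`. -/
def ChangXi (lam1 lam0 kap1 kap0 : Cardinal.{u}) (ξ : Ordinal.{u}) : Prop :=
  ∀ f : List Ordinal.{u} → Ordinal.{u},
    (∀ l : List Ordinal.{u}, (∀ x ∈ l, x < lam1.ord) → f l < lam1.ord) →
    ∃ X : Set Ordinal.{u}, X ⊆ Set.Iio lam1.ord ∧
      #(↥X) = Cardinal.lift.{u + 1} kap1 ∧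
      (∀ l : List Ordinal.{u}, (∀ x ∈ l, x ∈ X) → f l ∈ X) ∧
      #(↥(X ∩ Set.Iio lam0.ord)) = Cardinal.lift.{u + 1} kap0 ∧
      ∀ η : Ordinal.{u}, η < ξ → η ∈ X

/-!
If `κ₀ ≤ ξ` there is nothing to prove, so let `ξ < κ₀` and `λ₀ = λ^{+ξ}`, where `λ ≤ κ₀` or
`λ^{κ₀} ≤ λ₀` (in the first alternative take `λ = κ₀`). Given `f`, apply `↠_ξ` to a single
function `g` that evaluates every Skolem term built from `f`, from a collapse of each `α` onto
`|α|`, and from two operations binding parameters `γ⃗ < κ₀`: for `η` and `t(x⃗, γ⃗)`, a bound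
in `[λ^{+η}, λ^{+(η+1)})` above all values of `t(x⃗, ·)` below `λ^{+(η+1)}` (it exists by
regularity once `κ₀ < λ^{+(η+1)}`), and a code below `λ₀` of `γ⃗ ↦ t(x⃗, γ⃗)` on `κ₀^{<ω}`
(which exists when `λ^{κ₀} ≤ λ₀`). Let `X` be the model obtained and `Y` the set of values of
terms at points of `X` and parameters below `κ₀`. Then `Y` contains `X ∪ κ₀`, is closed under
`f` and has size `κ₁`, and `|Y ∩ λ^{+η}| ≤ κ₀` by induction on `η ≤ ξ`: for `η = 0` because
`Y ∩ λ` is decoded from `(X ∩ λ₀) × κ₀^{<ω}`; at successors because each `v ∈ Y` below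
`λ^{+(η+1)}` lies below a bound `α ∈ X ∩ λ₀` with `|α| = λ^{+η}`, and the collapse of `v` by `α`
lies in `Y ∩ λ^{+η}` and determines `v`; at limits because `η < κ₀`.
-/

open Set

theorem iterSucc_zero (κ : Cardinal.{u}) : iterSucc κ 0 = κ := by
  rw [iterSucc, Ordinal.limitRecOn_zero]

theorem iterSucc_add_one (κ : Cardinal.{u}) (η : Ordinal.{u}) :
    iterSucc κ (η + 1) = Order.succ (iterSucc κ η) := by
  rw [iterSucc, Ordinal.limitRecOn_add_one]
  rfl

theorem iterSucc_of_isSuccLimit (κ : Cardinal.{u}) {η : Ordinal.{u}} (hη : Order.IsSuccLimit η) :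
    iterSucc κ η = ⨆ ζ : Iio η, iterSucc κ ζ := by
  rw [iterSucc, Ordinal.limitRecOn_limit _ _ _ _ hη]
  rfl

theorem iterSucc_mono (κ : Cardinal.{u}) : Monotone (iterSucc κ) := by
  intro ζ η hζη
  induction η using Ordinal.limitRecOn generalizing ζ with
  | zero => rw [nonpos_iff_eq_zero.mp hζη]
  | add_one η ih =>
    rcases hζη.lt_or_eq with hlt | rfl
    · rw [iterSucc_add_one]
      exact (ih (Order.lt_add_one_iff.mp hlt)).trans (Order.le_succ _)
    · rfl
  | limit η hη _ =>
    rcases hζη.lt_or_eq with hlt | rfl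
    · rw [iterSucc_of_isSuccLimit κ hη]
      exact le_ciSup Cardinal.bddAbove_of_small (⟨ζ, hlt⟩ : Iio η)
    · rfl

theorem exists_lt_ord_iterSucc_of_isSuccLimit (κ : Cardinal.{u}) {η : Ordinal.{u}}
    (hη : Order.IsSuccLimit η) {v : Ordinal.{u}} (hv : v < (iterSucc κ η).ord) :
    ∃ ζ < η, v < (iterSucc κ ζ).ord := by
  have : Nonempty (Iio η) := ⟨⟨0, hη.bot_lt⟩⟩
  rw [Cardinal.lt_ord, iterSucc_of_isSuccLimit κ hη,
    lt_ciSup_iff Cardinal.bddAbove_of_small] at hv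
  obtain ⟨⟨ζ, hζ⟩, hv⟩ := hv
  exact ⟨ζ, hζ, Cardinal.lt_ord.mpr hv⟩

theorem ChangXi.mono {lam1 lam0 kap1 kap0 : Cardinal.{u}} {ζ ξ : Ordinal.{u}} (hζξ : ζ ≤ ξ)
    (h : ChangXi lam1 lam0 kap1 kap0 ξ) : ChangXi lam1 lam0 kap1 kap0 ζ := fun f hf =>
  (h f hf).imp fun _ hX => ⟨hX.1, hX.2.1, hX.2.2.1, hX.2.2.2.1,
    fun η hη => hX.2.2.2.2 η (hη.trans_le hζξ)⟩

theorem List.getD_map_range {α : Type*} {n i : ℕ} (f : ℕ → α) (d : α) (hi : i < n) :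
    ((List.range n).map f).getD i d = f i := by
  simp [hi]

theorem List.getD_mem_of_forall_mem {α : Type*} {L : List α} {s : Set α} {d : α}
    (hL : ∀ x ∈ L, x ∈ s) (hd : d ∈ s) (n : ℕ) : L.getD n d ∈ s := by
  rw [List.getD_eq_getElem?_getD]
  cases h : L[n]? with
  | none => exact hd
  | some x => exact hL x (List.mem_of_getElem? h)

theorem mk_setOf_forall_mem_lt_le (o : Ordinal.{u}) :
    #{L : List Ordinal.{u} | ∀ x ∈ L, x < o} ≤ max ℵ₀ (Cardinal.lift.{u + 1} o.card) := by
  have h := Cardinal.mk_range_le (f := List.map ((↑) : Iio o → Ordinal.{u}))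
  rw [range_list_map_coe] at h
  exact h.trans ((Cardinal.mk_list_le_max _).trans_eq (by rw [mk_Iio_ordinal]))

theorem mk_setOf_forall_mem_lt_ord_le {kap : Cardinal.{u}} (hkap : ℵ₀ ≤ kap) :
    #{L : List Ordinal.{u} | ∀ x ∈ L, x < kap.ord} ≤ Cardinal.lift.{u + 1} kap := by
  refine (mk_setOf_forall_mem_lt_le _).trans_eq ?_
  rw [Cardinal.card_ord, max_eq_right (by simpa using hkap)]

section Collapse

noncomputable def collapseEquiv (α : Ordinal.{u}) : Iio α ≃ Iio α.card.ord :=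
  Classical.choice (Cardinal.eq.mp (by rw [mk_Iio_ordinal, mk_Iio_ordinal, Cardinal.card_ord]))

noncomputable def collapse (α v : Ordinal.{u}) : Ordinal.{u} :=
  if h : v < α then collapseEquiv α ⟨v, h⟩ else 0

noncomputable def expand (α w : Ordinal.{u}) : Ordinal.{u} :=
  if h : w < α.card.ord then (collapseEquiv α).symm ⟨w, h⟩ else 0

variable {α v : Ordinal.{u}}

theorem collapse_lt (h : v < α) : collapse α v < α.card.ord := by
  rw [collapse, dif_pos h]
  exact (collapseEquiv α ⟨v, h⟩).2

theorem expand_collapse (h : v < α) : expand α (collapse α v) = v := by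
  rw [expand, dif_pos (collapse_lt h)]
  simp only [collapse, dif_pos h, Subtype.coe_eta, Equiv.symm_apply_apply]

end Collapse

section BoundOp

variable {lam kap : Cardinal.{u}} {η : Ordinal.{u}} {φ : List Ordinal.{u} → Ordinal.{u}}

noncomputable def boundOp (lam kap : Cardinal.{u}) (η : Ordinal.{u})
    (φ : List Ordinal.{u} → Ordinal.{u}) : Ordinal.{u} :=
  max (iterSucc lam η).ord
    (Order.succ (sSup (φ '' {L | ∀ x ∈ L, x < kap.ord} ∩ Iio (iterSucc lam (η + 1)).ord)))

theorem ord_iterSucc_le_boundOp : (iterSucc lam η).ord ≤ boundOp lam kap η φ :=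
  le_max_left _ _

theorem lt_boundOp {L : List Ordinal.{u}} (hL : ∀ x ∈ L, x < kap.ord)
    (h : φ L < (iterSucc lam (η + 1)).ord) : φ L < boundOp lam kap η φ :=
  (Order.lt_succ_iff.mpr (le_csSup (bddAbove_Iio.mono inter_subset_right)
    ⟨mem_image_of_mem φ (show L ∈ {L | ∀ x ∈ L, x < kap.ord} from hL), h⟩)).trans_le
    (le_max_right _ _)

theorem aleph0_le_iterSucc_of_lt_iterSucc_add_one (hkap : ℵ₀ ≤ kap)
    (hbig : kap < iterSucc lam (η + 1)) : ℵ₀ ≤ iterSucc lam η := by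
  by_contra! h
  rw [iterSucc_add_one] at hbig
  exact ((Order.succ_le_of_lt h).trans hkap).not_gt hbig

theorem boundOp_lt (hkap : ℵ₀ ≤ kap) (hbig : kap < iterSucc lam (η + 1)) :
    boundOp lam kap η φ < (iterSucc lam (η + 1)).ord := by
  have hinf := aleph0_le_iterSucc_of_lt_iterSucc_add_one hkap hbig
  have hreg : (iterSucc lam (η + 1)).IsRegular := by
    rw [iterSucc_add_one]; exact Cardinal.isRegular_succ hinf
  refine max_lt (Cardinal.ord_lt_ord.mpr ?_) ?_
  · rw [iterSucc_add_one]; exact Order.lt_succ _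
  refine (Cardinal.isSuccLimit_ord hreg.aleph0_le).succ_lt
    (Ordinal.sSup_lt_of_lt_cof ?_ fun _ h => h.2)
  rw [← Ordinal.lift_cof, hreg.cof_ord]
  calc #(φ '' {L | ∀ x ∈ L, x < kap.ord} ∩ Iio (iterSucc lam (η + 1)).ord : Set Ordinal.{u})
      ≤ #{L : List Ordinal.{u} | ∀ x ∈ L, x < kap.ord} :=
        (Cardinal.mk_le_mk_of_subset inter_subset_left).trans Cardinal.mk_image_le
    _ ≤ Cardinal.lift.{u + 1} kap := mk_setOf_forall_mem_lt_ord_le hkap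
    _ < Cardinal.lift.{u + 1} (iterSucc lam (η + 1)) := Cardinal.lift_lt.mpr hbig

end BoundOp

def IsCoding (lam kap : Cardinal.{u}) (a : Ordinal.{u})
    (code : (List Ordinal.{u} → Ordinal.{u}) → Ordinal.{u}) : Prop :=
  (∀ φ, code φ < a) ∧ ∃ decode : Ordinal.{u} → List Ordinal.{u} → Ordinal.{u},
    ∀ φ L, (∀ x ∈ L, x < kap.ord) → φ L < lam.ord → decode (code φ) L = φ L

theorem exists_isCoding {lam lam0 kap : Cardinal.{u}} (hkap : ℵ₀ ≤ kap) (hlam : lam ≠ 0)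
    (hpow : lam ^ kap ≤ lam0) : ∃ code, IsCoding lam kap lam0.ord code := by
  classical
  have hlam_pos : (0 : Ordinal.{u}) < lam.ord := by simpa [pos_iff_ne_zero] using hlam
  let trunc (φ : List Ordinal.{u} → Ordinal.{u}) (L : List Ordinal.{u}) : Ordinal.{u} :=
    if φ L < lam.ord then φ L else 0
  have trunc_lt (φ L) : trunc φ L < lam.ord := by
    dsimp only [trunc]; split_ifs with h
    exacts [h, hlam_pos]
  have hcard : #(List (Iio kap.ord) → Iio lam.ord) ≤ #(Iio lam0.ord) := by
    have : Nonempty (Iio kap.ord) := ⟨⟨0, by simpa using (Cardinal.aleph0_pos.trans_le hkap)⟩⟩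
    rw [← Cardinal.power_def, Cardinal.mk_list_eq_max_mk_aleph0, mk_Iio_ordinal,
      mk_Iio_ordinal, mk_Iio_ordinal, Cardinal.card_ord, Cardinal.card_ord, Cardinal.card_ord,
      max_eq_left (by simpa using hkap), ← Cardinal.lift_power, Cardinal.lift_le]
    exact hpow
  obtain ⟨e⟩ := hcard
  let code (φ : List Ordinal.{u} → Ordinal.{u}) : Ordinal.{u} :=
    e fun σ => ⟨trunc φ (σ.map (↑)), trunc_lt _ _⟩
  refine ⟨code, fun φ => (e _).2, fun δ => trunc (Function.invFun code δ), fun φ L hL hφ => ?_⟩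
  obtain ⟨σ, rfl⟩ : L ∈ range (List.map ((↑) : Iio kap.ord → Ordinal.{u})) := by
    rwa [range_list_map_coe]
  have hcode : code (Function.invFun code (code φ)) = code φ :=
    Function.invFun_eq ⟨φ, rfl⟩
  have := congrArg (fun F => (F σ : Ordinal.{u})) (e.injective (Subtype.ext hcode))
  simp only [trunc, if_pos hφ] at this
  exact this

/-- `var i` and `par i` stand for the `i`-th point of the model and the `i`-th parameter below
`κ₀`; the parameters of `t` are bound in `bound a t` and `code t`. A term denotes a list of
ordinals (`nil` and `cons` build argument lists for `app`), and its value is the head. -/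
inductive SkolemTerm : Type
  | var : ℕ → SkolemTerm
  | par : ℕ → SkolemTerm
  | nil : SkolemTerm
  | cons : SkolemTerm → SkolemTerm → SkolemTerm
  | app : SkolemTerm → SkolemTerm
  | collapse : SkolemTerm → SkolemTerm → SkolemTerm
  | bound : SkolemTerm → SkolemTerm → SkolemTerm
  | code : SkolemTerm → SkolemTerm
  deriving Countable, Inhabited

/-- The interpretation of Skolem terms: `base` and `kap` are the cardinals `λ` and `κ₀`. -/
structure SkolemOps where
  f : List Ordinal.{u} → Ordinal.{u}
  base : Cardinal.{u}
  kap : Cardinal.{u}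
  code : (List Ordinal.{u} → Ordinal.{u}) → Ordinal.{u}

namespace SkolemTerm

variable (O : SkolemOps.{u})

noncomputable def eval : SkolemTerm → (ℕ → Ordinal.{u}) → (ℕ → Ordinal.{u}) → List Ordinal.{u}
  | var i, xs, _ => [xs i]
  | par i, _, gs => [gs i]
  | nil, _, _ => []
  | cons a b, xs, gs => (eval a xs gs).headD 0 :: eval b xs gs
  | app a, xs, gs => [O.f (eval a xs gs)]
  | collapse a b, xs, gs => [_root_.collapse ((eval a xs gs).headD 0) ((eval b xs gs).headD 0)]
  | bound a t, xs, gs =>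
    [boundOp O.base O.kap ((eval a xs gs).headD 0) fun L => (eval t xs (L.getD · 0)).headD 0]
  | code t, xs, _ => [O.code fun L => (eval t xs (L.getD · 0)).headD 0]

noncomputable def value (t : SkolemTerm) (xs gs : ℕ → Ordinal.{u}) : Ordinal.{u} :=
  (eval O t xs gs).headD 0

@[simp] theorem value_var (i : ℕ) (xs gs : ℕ → Ordinal.{u}) : value O (var i) xs gs = xs i := rfl

@[simp] theorem value_collapse (a b : SkolemTerm) (xs gs : ℕ → Ordinal.{u}) :
    value O (collapse a b) xs gs = _root_.collapse (value O a xs gs) (value O b xs gs) := rfl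

@[simp] theorem value_bound (a t : SkolemTerm) (xs gs : ℕ → Ordinal.{u}) :
    value O (bound a t) xs gs =
      boundOp O.base O.kap (value O a xs gs) fun L => value O t xs (L.getD · 0) := rfl

def rename (ρ : ℕ → ℕ) : (ℕ → ℕ) → SkolemTerm → SkolemTerm
  | _, var i => var (ρ i)
  | σ, par i => par (σ i)
  | _, nil => nil
  | σ, cons a b => cons (rename ρ σ a) (rename ρ σ b)
  | σ, app a => app (rename ρ σ a)
  | σ, collapse a b => collapse (rename ρ σ a) (rename ρ σ b)
  | σ, bound a t => bound (rename ρ σ a) (rename ρ id t)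
  | _, code t => code (rename ρ id t)

theorem eval_rename (ρ σ : ℕ → ℕ) (t : SkolemTerm) (xs gs : ℕ → Ordinal.{u}) :
    eval O (rename ρ σ t) xs gs = eval O t (xs ∘ ρ) (gs ∘ σ) := by
  induction t generalizing σ gs <;> simp only [rename, eval, *] <;> rfl

def ofList : List SkolemTerm → SkolemTerm
  | [] => nil
  | t :: ts => cons t (ofList ts)

theorem eval_ofList (ts : List SkolemTerm) (xs gs : ℕ → Ordinal.{u}) :
    eval O (ofList ts) xs gs = ts.map (value O · xs gs) := by
  induction ts with
  | nil => rfl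
  | cons t ts ih => simp only [ofList, eval, ih, List.map_cons, value]

theorem exists_eval_congr (t : SkolemTerm) : ∃ n, ∀ xs xs' gs gs' : ℕ → Ordinal.{u},
    (∀ i < n, xs i = xs' i) → (∀ i < n, gs i = gs' i) → eval O t xs gs = eval O t xs' gs' := by
  induction t with
  | var i => exact ⟨i + 1, fun _ _ _ _ hx _ => by simp [eval, hx i (by omega)]⟩
  | par i => exact ⟨i + 1, fun _ _ _ _ _ hg => by simp [eval, hg i (by omega)]⟩
  | nil => exact ⟨0, fun _ _ _ _ _ _ => rfl⟩
  | app a iha =>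
    obtain ⟨n, hn⟩ := iha
    exact ⟨n, fun xs xs' gs gs' hx hg => by simp only [eval, hn xs xs' gs gs' hx hg]⟩
  | code t iht =>
    obtain ⟨n, hn⟩ := iht
    refine ⟨n, fun xs xs' gs gs' hx _ => ?_⟩
    simp only [eval, hn xs xs' _ _ hx fun _ _ => rfl]
  | cons a b iha ihb | collapse a b iha ihb =>
    obtain ⟨m, hm⟩ := iha
    obtain ⟨n, hn⟩ := ihb
    refine ⟨max m n, fun xs xs' gs gs' hx hg => ?_⟩
    simp only [eval,
      hm xs xs' gs gs' (fun i hi => hx i (lt_max_of_lt_left hi))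
        (fun i hi => hg i (lt_max_of_lt_left hi)),
      hn xs xs' gs gs' (fun i hi => hx i (lt_max_of_lt_right hi))
        (fun i hi => hg i (lt_max_of_lt_right hi))]
  | bound a t iha iht =>
    obtain ⟨m, hm⟩ := iha
    obtain ⟨n, hn⟩ := iht
    refine ⟨max m n, fun xs xs' gs gs' hx hg => ?_⟩
    simp only [eval,
      hm xs xs' gs gs' (fun i hi => hx i (lt_max_of_lt_left hi))
        (fun i hi => hg i (lt_max_of_lt_left hi)),
      hn xs xs' _ _ (fun i hi => hx i (lt_max_of_lt_right hi)) fun _ _ => rfl]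

theorem exists_value_eq_getD (t : SkolemTerm) : ∃ n, ∀ xs gs : ℕ → Ordinal.{u},
    value O t xs gs =
      value O t (((List.range n).map xs).getD · 0) (((List.range n).map gs).getD · 0) := by
  obtain ⟨n, hn⟩ := exists_eval_congr O t
  exact ⟨n, fun xs gs => congrArg (List.headD · 0) <| hn _ _ _ _
    (fun i hi => (List.getD_map_range xs 0 hi).symm)
    (fun i hi => (List.getD_map_range gs 0 hi).symm)⟩

end SkolemTerm

open SkolemTerm

namespace SkolemOps

variable (O : SkolemOps.{u})

noncomputable def decodeTerm : ℕ → SkolemTerm := (exists_surjective_nat SkolemTerm).choose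

theorem decodeTerm_surjective : Function.Surjective decodeTerm :=
  (exists_surjective_nat SkolemTerm).choose_spec

/-- The term to evaluate is read off the length of the argument list, so that every term is
evaluated at argument lists of arbitrarily large length. -/
noncomputable def skolemFun (B : Ordinal.{u}) (l : List Ordinal.{u}) : Ordinal.{u} :=
  let v := value O (decodeTerm l.length.unpair.1) (l.getD · 0) fun _ => 0
  if v < B then v else 0

def hull (X : Set Ordinal.{u}) : Set Ordinal.{u} :=
  {v | ∃ t xs gs, (∀ n, xs n ∈ X) ∧ (∀ n, gs n < O.kap.ord) ∧ value O t xs gs = v}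

variable {O} {X : Set Ordinal.{u}} {B : Ordinal.{u}}

theorem skolemFun_lt (hB : 0 < B) (l : List Ordinal.{u}) : O.skolemFun B l < B := by
  dsimp only [skolemFun]; split_ifs with h
  exacts [h, hB]

theorem value_mem_of_skolemFun_mem
    (hX : ∀ l : List Ordinal.{u}, (∀ x ∈ l, x ∈ X) → O.skolemFun B l ∈ X) (t : SkolemTerm)
    {xs : ℕ → Ordinal.{u}} (hxs : ∀ n, xs n ∈ X) (hB : value O t xs (fun _ => 0) < B) :
    value O t xs (fun _ => 0) ∈ X := by
  obtain ⟨n, hn⟩ := exists_eval_congr O t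
  obtain ⟨k, rfl⟩ := decodeTerm_surjective t
  let l := (List.range (Nat.pair k n)).map xs
  have hl : value O (decodeTerm k) (l.getD · 0) (fun _ => 0) =
      value O (decodeTerm k) xs (fun _ => 0) :=
    congrArg (List.headD · 0) <| hn _ _ _ _
      (fun i hi => List.getD_map_range xs 0 (hi.trans_le (Nat.right_le_pair k n))) fun _ _ => rfl
  have hmem := hX l (by simpa [l] using fun i _ => hxs i)
  rwa [skolemFun, List.length_map, List.length_range, Nat.unpair_pair, hl, if_pos hB] at hmem

theorem subset_hull (hκ : 0 < O.kap.ord) : X ⊆ O.hull X :=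
  fun x hx => ⟨var 0, fun _ => x, fun _ => 0, fun _ => hx, fun _ => hκ, rfl⟩

theorem Iio_subset_hull (hX : X.Nonempty) : Iio O.kap.ord ⊆ O.hull X :=
  fun γ hγ => ⟨par 0, fun _ => hX.some, fun _ => γ, fun _ => hX.some_mem, fun _ => hγ, rfl⟩

theorem exists_value_getD_eq_of_mem_hull {v : Ordinal.{u}} (hv : v ∈ O.hull X) :
    ∃ t xs, ∃ L : List Ordinal.{u},
      (∀ n, xs n ∈ X) ∧ (∀ γ ∈ L, γ < O.kap.ord) ∧ value O t xs (L.getD · 0) = v := by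
  obtain ⟨t, xs, gs, hxs, hgs, rfl⟩ := hv
  obtain ⟨n, hn⟩ := exists_value_eq_getD O t
  refine ⟨t, xs, (List.range n).map gs, hxs, by simpa using fun i _ => hgs i, ?_⟩
  have hL : (List.range n).map (((List.range n).map gs).getD · 0) = (List.range n).map gs :=
    List.map_congr_left fun i hi => List.getD_map_range gs 0 (List.mem_range.mp hi)
  rw [hn xs gs, hn xs, hL]

theorem exists_map_value_eq (hX : X.Nonempty) (hκ : 0 < O.kap.ord) {l : List Ordinal.{u}}
    (hl : ∀ v ∈ l, v ∈ O.hull X) : ∃ (ts : List SkolemTerm) (xs gs : ℕ → Ordinal.{u}),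
      (∀ n, xs n ∈ X) ∧ (∀ n, gs n < O.kap.ord) ∧ ts.map (value O · xs gs) = l := by
  induction l with
  | nil => exact ⟨[], fun _ => hX.some, fun _ => 0, fun _ => hX.some_mem, fun _ => hκ, rfl⟩
  | cons v l ih =>
    obtain ⟨t, xs₀, gs₀, hxs₀, hgs₀, rfl⟩ := hl v List.mem_cons_self
    obtain ⟨ts, xs₁, gs₁, hxs₁, hgs₁, rfl⟩ := ih fun w hw => hl w (List.mem_cons_of_mem _ hw)
    let e := Equiv.natSumNatEquivNat
    refine ⟨rename (e ∘ .inl) (e ∘ .inl) t :: ts.map (rename (e ∘ .inr) (e ∘ .inr)),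
      Sum.elim xs₀ xs₁ ∘ e.symm, Sum.elim gs₀ gs₁ ∘ e.symm, fun n => ?_, fun n => ?_, ?_⟩
    · rw [Function.comp_apply]
      rcases e.symm n with i | i
      exacts [hxs₀ i, hxs₁ i]
    · rw [Function.comp_apply]
      rcases e.symm n with i | i
      exacts [hgs₀ i, hgs₁ i]
    · simp [value, eval_rename, Function.comp_def]

theorem f_mem_hull (hX : X.Nonempty) (hκ : 0 < O.kap.ord) {l : List Ordinal.{u}}
    (hl : ∀ v ∈ l, v ∈ O.hull X) : O.f l ∈ O.hull X := by
  obtain ⟨ts, xs, gs, hxs, hgs, rfl⟩ := exists_map_value_eq hX hκ hl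
  exact ⟨app (ofList ts), xs, gs, hxs, hgs, by simp only [value, eval, eval_ofList]; rfl⟩

theorem mk_hull_le {c : Cardinal.{u + 1}} (hc : ℵ₀ ≤ c) (hX : #X ≤ c)
    (hκ : Cardinal.lift.{u + 1} O.kap ≤ c) : #(O.hull X) ≤ c := by
  let F (p : SkolemTerm × List X × List (Iio O.kap.ord)) : Ordinal.{u} :=
    value O p.1 ((p.2.1.map (↑)).getD · 0) ((p.2.2.map (↑)).getD · 0)
  have hsub : O.hull X ⊆ range F := by
    rintro v ⟨t, xs, gs, hxs, hgs, rfl⟩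
    obtain ⟨n, hn⟩ := exists_value_eq_getD O t
    obtain ⟨xl, hxl⟩ : (List.range n).map xs ∈ range (List.map ((↑) : X → Ordinal.{u})) := by
      rw [range_list_map_coe]; simpa using fun i _ => hxs i
    obtain ⟨gl, hgl⟩ : (List.range n).map gs ∈
        range (List.map ((↑) : Iio O.kap.ord → Ordinal.{u})) := by
      rw [range_list_map_coe]; simpa using fun i _ => hgs i
    exact ⟨(t, xl, gl), by simp only [F, hxl, hgl, ← hn]⟩
  have hlist {α : Type (u + 1)} (hα : #α ≤ c) : #(List α) ≤ c :=
    (Cardinal.mk_list_le_max α).trans (max_le hc hα)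
  calc #(O.hull X) ≤ #(SkolemTerm × List X × List (Iio O.kap.ord)) :=
        (Cardinal.mk_le_mk_of_subset hsub).trans Cardinal.mk_range_le
    _ = Cardinal.lift #SkolemTerm * (#(List X) * #(List (Iio O.kap.ord))) := by
        simp [Cardinal.mk_prod]
    _ ≤ ℵ₀ * (c * c) := by
        gcongr
        · simp [Cardinal.mk_le_aleph0]
        · exact hlist hX
        · exact hlist (by rwa [mk_Iio_ordinal, Cardinal.card_ord])
    _ = c := by rw [Cardinal.mul_eq_self hc, Cardinal.aleph0_mul_eq hc]

theorem hull_inter_Iio_add_one_subset (hκ : ℵ₀ ≤ O.kap)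
    (hX : ∀ l : List Ordinal.{u}, (∀ x ∈ l, x ∈ X) → O.skolemFun B l ∈ X)
    {η : Ordinal.{u}} (hη : η ∈ X) (hbig : O.kap < iterSucc O.base (η + 1))
    (hB : (iterSucc O.base (η + 1)).ord ≤ B) :
    O.hull X ∩ Iio (iterSucc O.base (η + 1)).ord ⊆
      image2 expand (X ∩ Iio (iterSucc O.base (η + 1)).ord)
        (O.hull X ∩ Iio (iterSucc O.base η).ord) := by
  rintro _ ⟨hv, hvlt⟩
  obtain ⟨t, xs, L, hxs, hL, rfl⟩ := exists_value_getD_eq_of_mem_hull hv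
  -- `η` becomes variable `0`, so that the bound `α` is the value of a term at points of `X`
  let xs' : ℕ → Ordinal.{u} := fun | 0 => η | n + 1 => xs n
  have hxs' : ∀ n, xs' n ∈ X := fun | 0 => hη | n + 1 => hxs n
  let t' := rename Nat.succ id t
  have ht' (gs : ℕ → Ordinal.{u}) : value O t' xs' gs = value O t xs gs := by
    simp only [t', value, eval_rename]; rfl
  let α := value O (bound (var 0) t') xs' fun _ => 0
  have hα : α = boundOp O.base O.kap η fun L => value O t xs (L.getD · 0) := by
    simp only [α, value_bound, value_var, ht']; rfl
  have hαlt : α < (iterSucc O.base (η + 1)).ord := hα ▸ boundOp_lt hκ hbig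
  have hvα : value O t xs (L.getD · 0) < α := hα ▸ lt_boundOp hL hvlt
  have hcard : α.card = iterSucc O.base η := by
    refine le_antisymm ?_ (Cardinal.ord_le.mp (hα ▸ ord_iterSucc_le_boundOp))
    rw [← Order.lt_succ_iff, ← iterSucc_add_one]
    exact Cardinal.lt_ord.mp hαlt
  have hκ0 : 0 < O.kap.ord := Cardinal.ord_pos.mpr (Cardinal.aleph0_pos.trans_le hκ)
  refine ⟨α, ⟨value_mem_of_skolemFun_mem hX _ hxs' (hαlt.trans_le hB), hαlt⟩, _,
    ⟨⟨SkolemTerm.collapse (bound (var 0) t') t', xs', (L.getD · 0), hxs',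
      List.getD_mem_of_forall_mem (s := Iio O.kap.ord) hL hκ0, ?_⟩, hcard ▸ collapse_lt hvα⟩,
    expand_collapse hvα⟩
  rw [value_collapse, ht']
  rfl

theorem hull_inter_Iio_base_subset
    (hX : ∀ l : List Ordinal.{u}, (∀ x ∈ l, x ∈ X) → O.skolemFun B l ∈ X) {a : Ordinal.{u}}
    (ha : a ≤ B) (hcode : ∀ φ, O.code φ < a) {decode : Ordinal.{u} → List Ordinal.{u} → Ordinal.{u}}
    (hdecode : ∀ φ L, (∀ x ∈ L, x < O.kap.ord) → φ L < O.base.ord → decode (O.code φ) L = φ L) :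
    O.hull X ∩ Iio O.base.ord ⊆ image2 decode (X ∩ Iio a) {L | ∀ x ∈ L, x < O.kap.ord} := by
  rintro _ ⟨hv, hvlt⟩
  obtain ⟨t, xs, L, hxs, hL, rfl⟩ := exists_value_getD_eq_of_mem_hull hv
  have hδ := hcode fun L => value O t xs (L.getD · 0)
  exact ⟨_, ⟨value_mem_of_skolemFun_mem hX (SkolemTerm.code t) hxs (hδ.trans_le ha), hδ⟩, L, hL,
    hdecode _ L hL hvlt⟩

theorem mk_hull_inter_Iio_base_le (hκ : ℵ₀ ≤ O.kap)
    (hX : ∀ l : List Ordinal.{u}, (∀ x ∈ l, x ∈ X) → O.skolemFun B l ∈ X) {a : Ordinal.{u}}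
    (ha : a ≤ B) (hXa : #(X ∩ Iio a : Set Ordinal.{u}) ≤ Cardinal.lift.{u + 1} O.kap)
    (hcode : O.base ≤ O.kap ∨ IsCoding O.base O.kap a O.code) :
    #(O.hull X ∩ Iio O.base.ord : Set Ordinal.{u}) ≤ Cardinal.lift.{u + 1} O.kap := by
  rcases hcode with hle | ⟨hcode, decode, hdecode⟩
  · refine (Cardinal.mk_le_mk_of_subset inter_subset_right).trans ?_
    rwa [mk_Iio_ordinal, Cardinal.card_ord, Cardinal.lift_le]
  calc _ ≤ #(image2 decode (X ∩ Iio a) {L | ∀ x ∈ L, x < O.kap.ord}) :=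
        Cardinal.mk_le_mk_of_subset (hull_inter_Iio_base_subset hX ha hcode hdecode)
    _ ≤ _ := Cardinal.mk_image2_le
    _ ≤ Cardinal.lift.{u + 1} O.kap * Cardinal.lift.{u + 1} O.kap :=
        mul_le_mul' hXa (mk_setOf_forall_mem_lt_ord_le hκ)
    _ = _ := Cardinal.mul_eq_self (by simpa using hκ)

theorem mk_hull_inter_Iio_iterSucc_le (hκ : ℵ₀ ≤ O.kap)
    (hX : ∀ l : List Ordinal.{u}, (∀ x ∈ l, x ∈ X) → O.skolemFun B l ∈ X)
    {ξ : Ordinal.{u}} (hξ : ξ < O.kap.ord) (hξX : ∀ η < ξ, η ∈ X)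
    (hXξ : #(X ∩ Iio (iterSucc O.base ξ).ord : Set Ordinal.{u}) ≤ Cardinal.lift.{u + 1} O.kap)
    (hB : (iterSucc O.base ξ).ord ≤ B)
    (hbase : #(O.hull X ∩ Iio O.base.ord : Set Ordinal.{u}) ≤ Cardinal.lift.{u + 1} O.kap)
    {η : Ordinal.{u}} (hηξ : η ≤ ξ) :
    #(O.hull X ∩ Iio (iterSucc O.base η).ord : Set Ordinal.{u}) ≤
      Cardinal.lift.{u + 1} O.kap := by
  have hκ' : ℵ₀ ≤ Cardinal.lift.{u + 1} O.kap := by simpa using hκ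
  induction η using Ordinal.limitRecOn with
  | zero => rwa [iterSucc_zero]
  | add_one η ih =>
    have hηξ' : η < ξ := Order.add_one_le_iff.mp hηξ
    rcases le_or_gt (iterSucc O.base (η + 1)) O.kap with hsmall | hbig
    · refine (Cardinal.mk_le_mk_of_subset inter_subset_right).trans ?_
      rwa [mk_Iio_ordinal, Cardinal.card_ord, Cardinal.lift_le]
    have hc : (iterSucc O.base (η + 1)).ord ≤ (iterSucc O.base ξ).ord :=
      Cardinal.ord_le_ord.mpr (iterSucc_mono _ hηξ)
    calc _ ≤ #(image2 expand (X ∩ Iio (iterSucc O.base (η + 1)).ord)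
            (O.hull X ∩ Iio (iterSucc O.base η).ord)) :=
          Cardinal.mk_le_mk_of_subset
            (hull_inter_Iio_add_one_subset hκ hX (hξX η hηξ') hbig (hc.trans hB))
      _ ≤ _ := Cardinal.mk_image2_le
      _ ≤ Cardinal.lift.{u + 1} O.kap * Cardinal.lift.{u + 1} O.kap := by
          gcongr
          · exact (Cardinal.mk_le_mk_of_subset
              (inter_subset_inter_right _ (Iio_subset_Iio hc))).trans hXξ
          · exact ih hηξ'.le
      _ = _ := Cardinal.mul_eq_self hκ'
  | limit η hη ih =>
    have hsub : O.hull X ∩ Iio (iterSucc O.base η).ord ⊆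
        ⋃ ζ : Iio η, O.hull X ∩ Iio (iterSucc O.base ζ).ord := by
      rintro v ⟨hv, hvlt⟩
      obtain ⟨ζ, hζ, hvζ⟩ := exists_lt_ord_iterSucc_of_isSuccLimit _ hη hvlt
      exact mem_iUnion.mpr ⟨⟨ζ, hζ⟩, hv, hvζ⟩
    calc _ ≤ _ := Cardinal.mk_le_mk_of_subset hsub
      _ ≤ _ := Cardinal.mk_iUnion_le _
      _ ≤ Cardinal.lift.{u + 1} O.kap * Cardinal.lift.{u + 1} O.kap := by
          gcongr
          · rw [mk_Iio_ordinal, Cardinal.lift_le]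
            exact (Cardinal.lt_ord.mp (hηξ.trans_lt hξ)).le
          · exact ciSup_le' fun ζ => ih ζ ζ.2 (ζ.2.le.trans hηξ)
      _ = _ := Cardinal.mul_eq_self hκ'

end SkolemOps

theorem exists_isCoding_of_le_or_pow_le {lam lam0 kap : Cardinal.{u}} (hkap : ℵ₀ ≤ kap)
    (h : lam ≤ kap ∨ lam ^ kap ≤ lam0) : ∃ code, lam ≤ kap ∨ IsCoding lam kap lam0.ord code := by
  rcases le_or_gt lam kap with hle | hlt
  · exact ⟨fun _ => 0, Or.inl hle⟩
  · obtain ⟨code, hcode⟩ := exists_isCoding hkap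
      (Cardinal.aleph0_pos.trans (hkap.trans_lt hlt)).ne' (h.resolve_left hlt.not_ge)
    exact ⟨code, Or.inr hcode⟩

theorem changXi_ord_of_eq_iterSucc {lam1 lam0 kap1 kap0 lam : Cardinal.{u}} {ξ : Ordinal.{u}}
    (hkap0 : ℵ₀ ≤ kap0) (hlam : lam0 ≤ lam1) (hkap : kap0 ≤ kap1) (hξ : ξ < kap0.ord)
    (heq : lam0 = iterSucc lam ξ) (hpow : lam ≤ kap0 ∨ lam ^ kap0 ≤ lam0)
    (h : ChangXi lam1 lam0 kap1 kap0 ξ) : ChangXi lam1 lam0 kap1 kap0 kap0.ord := by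
  intro f hf
  obtain ⟨code, hcode⟩ := exists_isCoding_of_le_or_pow_le hkap0 hpow
  let O : SkolemOps.{u} := ⟨f, lam, kap0, code⟩
  have hκ0 : 0 < kap0.ord := Cardinal.ord_pos.mpr (Cardinal.aleph0_pos.trans_le hkap0)
  have hlam01 : lam0.ord ≤ lam1.ord := Cardinal.ord_le_ord.mpr hlam
  obtain ⟨X, hXsub, hXcard, hXcl, hX0, hXξ⟩ := h (O.skolemFun lam1.ord) fun l _ =>
    SkolemOps.skolemFun_lt (zero_le.trans_lt (hf [] nofun)) l
  have hkap0lam0 : kap0 ≤ lam0 := by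
    have := hX0 ▸ Cardinal.mk_le_mk_of_subset (inter_subset_right (s := X))
    rwa [mk_Iio_ordinal, Cardinal.card_ord, Cardinal.lift_le] at this
  have hκ1 : ℵ₀ ≤ Cardinal.lift.{u + 1} kap1 := by simpa using hkap0.trans hkap
  have hXne : X.Nonempty := nonempty_coe_sort.mp
    (Cardinal.mk_ne_zero_iff.mp (hXcard ▸ (Cardinal.aleph0_pos.trans_le hκ1).ne'))
  have hcount := O.mk_hull_inter_Iio_iterSucc_le hkap0 hXcl hξ hXξ (heq ▸ hX0.le) (heq ▸ hlam01)
    (O.mk_hull_inter_Iio_base_le hkap0 hXcl hlam01 hX0.le hcode) le_rfl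
  rw [← heq] at hcount
  have hκ0_sub : Iio kap0.ord ⊆ O.hull X ∩ Iio lam1.ord ∩ Iio lam0.ord := fun η hη =>
    have hηlam0 : η < lam0.ord := hη.trans_le (Cardinal.ord_le_ord.mpr hkap0lam0)
    ⟨⟨O.Iio_subset_hull hXne hη, hηlam0.trans_le hlam01⟩, hηlam0⟩
  refine ⟨O.hull X ∩ Iio lam1.ord, inter_subset_right, le_antisymm ?_ ?_,
    fun l hl => ⟨O.f_mem_hull hXne hκ0 fun v hv => (hl v hv).1, hf l fun v hv => (hl v hv).2⟩,
    le_antisymm ?_ ?_, fun η hη => (hκ0_sub hη).1⟩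
  · exact (Cardinal.mk_le_mk_of_subset inter_subset_left).trans
      (O.mk_hull_le hκ1 hXcard.le (Cardinal.lift_le.mpr hkap))
  · exact hXcard ▸ Cardinal.mk_le_mk_of_subset fun x hx => ⟨O.subset_hull hκ0 hx, hXsub hx⟩
  · exact (Cardinal.mk_le_mk_of_subset (inter_subset_inter_left _ inter_subset_left)).trans hcount
  · simpa using Cardinal.mk_le_mk_of_subset hκ0_sub

theorem changXi_of_changXi_general (lam1 lam0 kap1 kap0 : Cardinal.{u}) (ξ : Ordinal.{u})
    (hkap0 : ℵ₀ ≤ kap0)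
    (hlam : lam0 ≤ lam1) (hkap : kap0 ≤ kap1)
    (hcase : lam0 = iterSucc kap0 ξ ∨
      ∃ lam : Cardinal.{u}, lam ≤ lam0 ∧ lam0 = iterSucc lam ξ ∧ lam ^ kap0 ≤ lam0)
    (h : ChangXi lam1 lam0 kap1 kap0 ξ) :
    ChangXi lam1 lam0 kap1 kap0 kap0.ord := by
  rcases le_or_gt kap0.ord ξ with hξ | hξ
  · exact h.mono hξ
  rcases hcase with heq | ⟨lam, -, heq, hpow⟩
  · exact changXi_ord_of_eq_iterSucc hkap0 hlam hkap hξ heq (Or.inl le_rfl) h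
  · exact changXi_ord_of_eq_iterSucc hkap0 hlam hkap hξ heq (Or.inr hpow) h

/-- Suppose either `λ0 = κ0^{+ξ}`, or there is `λ ≤ λ0` with `λ0 = λ^{+ξ}` and
`λ^{κ0} ≤ λ0`.  If `(λ1,λ0) ↠_ξ (κ1,κ0)`, then `(λ1,λ0) ↠_{κ0} (κ1,κ0)`. -/
theorem changXi_of_changXi (lam1 lam0 kap1 kap0 : Cardinal.{u}) (ξ : Ordinal.{u})
    (hlam0 : ℵ₀ ≤ lam0) (hkap0 : ℵ₀ ≤ kap0)
    (hlam : lam0 ≤ lam1) (hkap : kap0 ≤ kap1)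
    (hcase : lam0 = iterSucc kap0 ξ ∨
      ∃ lam : Cardinal.{u}, lam ≤ lam0 ∧ lam0 = iterSucc lam ξ ∧ lam ^ kap0 ≤ lam0)
    (h : ChangXi lam1 lam0 kap1 kap0 ξ) :
    ChangXi lam1 lam0 kap1 kap0 kap0.ord :=
  changXi_of_changXi_general lam1 lam0 kap1 kap0 ξ hkap0 hlam hkap hcase h
end

section
/- If κ is a regular infinite cardinal and λ > κ is inaccessible, then Col(κ,<λ) is λ-c.c.: every antichain of Col(κ,<λ) has cardinality less than λ. -/
open Cardinal

universe u

/-- A condition in the Levy collapse `Col(κ,o)` (collapsing the ordinal `o` to `κ`):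
a partial function from `κ` to `o` whose domain has cardinality `< κ`. -/
def IsLevyCond (κ : Cardinal.{u}) (o : Ordinal.{u}) (f : Ordinal.{u} → Option Ordinal.{u}) :
    Prop :=
  (∀ a, f a ≠ none → a < κ.ord) ∧ (∀ a b, f a = some b → b < o) ∧
    #(↥{a : Ordinal.{u} | f a ≠ none}) < Cardinal.lift.{u + 1} κ

/-- The Levy collapse `Col(κ,<λ)`: the `<κ`-support product of `Col(κ,α)` over `α < λ`.
Conditions are functions `p` with `p(α) ∈ Col(κ,α)` for each `α < λ` (and `p(α)` the
empty condition for `α ≥ λ`) such that `|{α < λ : p(α) ≠ ∅}| < κ`. -/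
def LevyColLt (κ lam : Cardinal.{u}) : Type (u + 1) :=
  {p : Ordinal.{u} → Ordinal.{u} → Option Ordinal.{u} //
    (∀ α, α < lam.ord → IsLevyCond κ α (p α)) ∧
    (∀ α, ¬ α < lam.ord → p α = fun _ => none) ∧
    #(↥{α : Ordinal.{u} | p α ≠ fun _ => none}) < Cardinal.lift.{u + 1} κ}

/-- The coordinatewise order on `Col(κ,<λ)`: `p ≤ q` iff `p(α) ⊇ q(α)` for all `α`. -/
def LevyColLt.le {κ lam : Cardinal.{u}} (p q : LevyColLt κ lam) : Prop :=
  ∀ α a b, q.1 α a = some b → p.1 α a = some b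

/-!
A condition restricted to the coordinates below `β < λ` is coded by a partial function
`β × κ → β`, so by inaccessibility there are fewer than `λ` such restrictions. Choosing one
member of the antichain `A` for each restriction of a member of `A` below `β`, the supports of
the chosen conditions are bounded by some `γ < λ`. Iterating `β ↦ γ` `κ` times gives a closure
point `B < λ` of cofinality `κ`. For `p ∈ A`, its support meets `B` in a set bounded by some
`β < B`, since `|supp p| < κ = cf B`; the chosen `q ∈ A` agreeing with `p` below `β` is
supported below `B`, so `p` and `q` agree on their common coordinates and are compatible, hence
equal. So every member of `A` is supported below `B` and determined by its restriction to `B`,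
of which there are fewer than `λ`.
-/

open Set

theorem Cardinal.mk_lt_of_subset_union {α : Type*} {c : Cardinal} (hc : ℵ₀ ≤ c)
    {s t w : Set α} (h : w ⊆ s ∪ t) (hs : #s < c) (ht : #t < c) : #w < c :=
  (mk_le_mk_of_subset h).trans_lt <| (mk_union_le s t).trans_lt <| add_lt_of_lt hc hs ht

theorem Cardinal.IsStrongLimit.power_lt {c a b : Cardinal.{u}} (hc : c.IsStrongLimit)
    (ha : a < c) (hb : b < c) : a ^ b < c :=
  calc a ^ b ≤ (2 ^ a) ^ b := power_le_power_right (cantor a).le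
    _ = 2 ^ (a * b) := power_mul.symm
    _ < c := hc.isStrongPrelimit (mul_lt_of_lt hc.aleph0_le ha hb)

namespace Ordinal

theorem exists_lt_subset_Iio_of_mk_lt_cof {s : Set Ordinal.{u}} {a : Ordinal.{u}}
    (hs : s ⊆ Iio a) (hsa : #s < Cardinal.lift.{u + 1} a.cof) : ∃ b < a, s ⊆ Iio b := by
  have hbdd : BddAbove ((· + 1) '' s) :=
    ⟨a, by rintro _ ⟨i, hi, rfl⟩; exact Order.add_one_le_of_lt (hs hi)⟩
  refine ⟨sSup ((· + 1) '' s), sSup_add_one_lt_of_lt_cof (by rwa [← lift_cof]) hs, ?_⟩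
  exact fun i hi => (lt_add_one i).trans_le (le_csSup hbdd (mem_image_of_mem _ hi))

theorem lift_iSup_lt_ord_of_isRegular {ι : Type*} {f : ι → Ordinal.{u}} {c : Cardinal.{u}}
    (hc : c.IsRegular) (hι : Cardinal.lift.{u} #ι < Cardinal.lift c) (hf : ∀ i, f i < c.ord) :
    ⨆ i, f i < c.ord :=
  lift_iSup_lt_of_lt_cof (by rwa [← lift_cof, hc.cof_ord]) hf

theorem lift_mk_Iic_lt_of_lt_ord {o : Ordinal.{u}} {c : Cardinal.{u}} (hc : ℵ₀ ≤ c)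
    (ho : o < c.ord) : Cardinal.lift.{u} #(Iic o) < Cardinal.lift.{u + 1} c := by
  have hsub : Iic o ⊆ Iio (o + 1) := fun _ h => mem_Iio.2 (Order.lt_add_one_iff.2 h)
  refine (Cardinal.lift_le.2 (mk_le_mk_of_subset hsub)).trans_lt ?_
  rw [Cardinal.mk_Iio_ordinal, Cardinal.lift_lift, Cardinal.lift_lt, ← lt_ord]
  exact (isSuccLimit_ord hc).add_one_lt ho

noncomputable def closureStep (g : Ordinal.{u} → Ordinal.{u}) (γ : Ordinal.{u}) : Ordinal.{u} :=
  ⨆ β : Iic γ, max β.1 (g β) + 1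

noncomputable def closureSeq (g : Ordinal.{u} → Ordinal.{u}) (η : Ordinal.{u}) : Ordinal.{u} :=
  ⨆ ζ : Iio η, closureStep g (closureSeq g ζ)
termination_by η
decreasing_by exact ζ.2

variable {g : Ordinal.{u} → Ordinal.{u}}

theorem max_lt_closureStep {β γ : Ordinal.{u}} (h : β ≤ γ) : max β (g β) < closureStep g γ :=
  lt_iSup_add_one (fun β : Iic γ => max β.1 (g β)) ⟨β, h⟩

theorem closureStep_lt_ord {c : Cardinal.{u}} (hc : c.IsRegular)
    (hg : ∀ β < c.ord, g β < c.ord) {γ : Ordinal.{u}} (hγ : γ < c.ord) :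
    closureStep g γ < c.ord := by
  refine lift_iSup_lt_ord_of_isRegular hc (lift_mk_Iic_lt_of_lt_ord hc.aleph0_le hγ)
    fun β => ?_
  have hβ : β.1 < c.ord := β.2.trans_lt hγ
  exact (isSuccLimit_ord hc.aleph0_le).add_one_lt (max_lt hβ (hg β hβ))

theorem closureSeq_eq (η : Ordinal.{u}) :
    closureSeq g η = ⨆ ζ : Iio η, closureStep g (closureSeq g ζ) := by
  rw [closureSeq]

theorem closureStep_closureSeq_le {ζ η : Ordinal.{u}} (h : ζ < η) :
    closureStep g (closureSeq g ζ) ≤ closureSeq g η := by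
  rw [closureSeq_eq η]
  exact Ordinal.le_iSup (fun ζ : Iio η => closureStep g (closureSeq g ζ)) ⟨ζ, h⟩

theorem closureSeq_strictMono : StrictMono (closureSeq g) := fun _ _ h =>
  ((le_max_left _ _).trans_lt (max_lt_closureStep le_rfl)).trans_le (closureStep_closureSeq_le h)

theorem closureSeq_lt_ord {c : Cardinal.{u}} (hc : c.IsRegular) (hg : ∀ β < c.ord, g β < c.ord)
    {η : Ordinal.{u}} (hη : η < c.ord) : closureSeq g η < c.ord := by
  induction η using WellFoundedLT.induction with
  | _ η ih =>
    rw [closureSeq_eq]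
    refine lift_iSup_lt_ord_of_isRegular hc ?_ fun ζ =>
      closureStep_lt_ord hc hg (ih ζ ζ.2 (ζ.2.trans hη))
    rw [Cardinal.mk_Iio_ordinal, Cardinal.lift_lift, Cardinal.lift_lt, ← lt_ord]
    exact hη

/-- With `g β` a witness for `β`, the supremum of the first `κ` stages of the closure under `g`
is the required closure point; its cofinality is `κ` as the stages increase strictly. -/
theorem exists_closed_lt_ord_cof_eq {κ lam : Cardinal.{u}} (hκ : κ.IsRegular)
    (hlam : lam.IsRegular) (hκlam : κ < lam) {P : Ordinal.{u} → Ordinal.{u} → Prop}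
    (hP : ∀ β < lam.ord, ∃ γ < lam.ord, P β γ) :
    ∃ B < lam.ord, B.cof = κ ∧ ∀ β < B, ∃ γ < B, P β γ := by
  choose! g hg hgP using hP
  have hκlim := isSuccLimit_ord hκ.aleph0_le
  have hB : ⨆ η : Iio κ.ord, closureSeq g η < lam.ord := by
    refine lift_iSup_lt_ord_of_isRegular hlam ?_ fun η =>
      closureSeq_lt_ord hlam hg (η.2.trans (ord_lt_ord.2 hκlam))
    rwa [Cardinal.mk_Iio_ordinal, Cardinal.lift_lift, Cardinal.lift_lt, card_ord]
  refine ⟨_, hB, ?_, fun β hβ => ⟨g β, ?_, hgP β (hβ.trans hB)⟩⟩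
  · rw [cof_iSup_Iio (fun _ _ h => closureSeq_strictMono h) hκlim.isSuccPrelimit, hκ.cof_ord]
  · obtain ⟨η, hβη⟩ := Ordinal.lt_iSup_iff.1 hβ
    calc g β < closureStep g (closureSeq g η) :=
          (le_max_right _ _).trans_lt (max_lt_closureStep hβη.le)
      _ ≤ closureSeq g (η + 1) := closureStep_closureSeq_le (lt_add_one _)
      _ ≤ _ := Ordinal.le_iSup (fun η : Iio κ.ord => closureSeq g η)
          ⟨_, hκlim.add_one_lt η.2⟩

end Ordinal

theorem IsLevyCond.or {κ : Cardinal.{u}} (hκ : ℵ₀ ≤ κ) {o : Ordinal.{u}}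
    {f f' : Ordinal.{u} → Option Ordinal.{u}} (hf : IsLevyCond κ o f)
    (hf' : IsLevyCond κ o f') : IsLevyCond κ o fun a => (f a).or (f' a) := by
  have hdom : {a | (f a).or (f' a) ≠ none} ⊆ {a | f a ≠ none} ∪ {a | f' a ≠ none} := by
    intro a ha
    by_contra h
    simp_all [Option.or_eq_none_iff]
  refine ⟨fun a ha => ?_, fun a b hb => ?_, mk_lt_of_subset_union (aleph0_le_lift.2 hκ) hdom
    hf.2.2 hf'.2.2⟩
  · rcases hdom ha with h | h
    exacts [hf.1 a h, hf'.1 a h]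
  · rcases Option.or_eq_some_iff.1 hb with h | ⟨-, h⟩
    exacts [hf.2.1 a b h, hf'.2.1 a b h]

namespace LevyColLt

variable {κ lam : Cardinal.{u}}

def support (p : LevyColLt κ lam) : Set Ordinal.{u} :=
  {α | p.1 α ≠ fun _ => none}

theorem mk_support_lt (p : LevyColLt κ lam) : #p.support < lift.{u + 1} κ :=
  p.2.2.2

theorem support_subset_Iio (p : LevyColLt κ lam) : p.support ⊆ Iio lam.ord :=
  fun α hα => by_contra fun h => hα (p.2.2.1 α h)

theorem mem_support_of_eq_some {p : LevyColLt κ lam} {α a b : Ordinal.{u}}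
    (h : p.1 α a = some b) : α ∈ p.support :=
  fun hα => by simp [hα] at h

theorem lt_of_eq_some {p : LevyColLt κ lam} {α a b : Ordinal.{u}} (h : p.1 α a = some b) :
    a < κ.ord ∧ b < α :=
  have hcond := p.2.1 α (p.support_subset_Iio (mem_support_of_eq_some h))
  ⟨hcond.1 a (by simp [h]), hcond.2.1 a b h⟩

theorem exists_le_le_of_agree (hκ : ℵ₀ ≤ κ) {p q : LevyColLt κ lam}
    (h : ∀ α a b b', p.1 α a = some b → q.1 α a = some b' → b = b') :
    ∃ r : LevyColLt κ lam, r.le p ∧ r.le q := by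
  have hsupp : {α | (fun a => (p.1 α a).or (q.1 α a)) ≠ fun _ => none} ⊆
      p.support ∪ q.support := by
    intro α hα
    by_contra hpq
    obtain ⟨hp, hq⟩ := not_or.1 hpq
    exact hα (by simp [not_not.1 hp, not_not.1 hq])
  refine ⟨⟨fun α a => (p.1 α a).or (q.1 α a), fun α hα => (p.2.1 α hα).or hκ (q.2.1 α hα),
    fun α hα => by simp [p.2.2.1 α hα, q.2.2.1 α hα],
    mk_lt_of_subset_union (aleph0_le_lift.2 hκ) hsupp p.mk_support_lt q.mk_support_lt⟩,
    fun α a b hb => by simp [hb], fun α a b hb => ?_⟩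
  rcases hp : p.1 α a with _ | b'
  · simp [hp, hb]
  · simp [hp, h α a b' b hp hb]

noncomputable def restrict (β : Ordinal.{u}) (p : LevyColLt κ lam) :
    Ordinal.{u} → Ordinal.{u} → Option Ordinal.{u} :=
  fun α => if α < β then p.1 α else fun _ => none

theorem eq_of_restrict_eq (hκ : ℵ₀ ≤ κ) {A : Set (LevyColLt κ lam)}
    (hA : IsStrongAntichain (flip LevyColLt.le) A) {p q : LevyColLt κ lam} (hp : p ∈ A)
    (hq : q ∈ A) {β : Ordinal.{u}} (hpq : restrict β p = restrict β q)
    (hsupp : p.support ∩ q.support ⊆ Iio β) : p = q := by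
  obtain ⟨r, hrp, hrq⟩ := exists_le_le_of_agree hκ fun α a b b' hb hb' => by
    have hα : α < β := hsupp ⟨mem_support_of_eq_some hb, mem_support_of_eq_some hb'⟩
    simpa [restrict, hα, hb, hb'] using congrFun (congrFun hpq α) a
  exact hA.eq hp hq hrp hrq

variable (κ) in
/-- Reads a partial function `β × κ → β` as a restriction to `β`. -/
noncomputable def decode (β : Ordinal.{u}) (e : Iio β × Iio κ.ord → Option (Iio β)) :
    Ordinal.{u} → Ordinal.{u} → Option Ordinal.{u} :=
  fun α a =>
    if h : α < β ∧ a < κ.ord then (e (⟨α, h.1⟩, ⟨a, h.2⟩)).map Subtype.val else none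

theorem restrict_mem_range_decode (β : Ordinal.{u}) (p : LevyColLt κ lam) :
    restrict β p ∈ range (decode κ β) := by
  refine ⟨fun x => (p.1 x.1 x.2).attachWith (· ∈ Iio β)
    fun b hb => (lt_of_eq_some hb).2.trans x.1.2, ?_⟩
  funext α a
  by_cases h : α < β ∧ a < κ.ord
  · simp only [decode, restrict, dif_pos h, if_pos h.1]
    exact Option.unattach_attachWith
  · simp only [decode, dif_neg h, restrict]
    split_ifs with hα
    · by_contra hne
      obtain ⟨b, hb⟩ := Option.ne_none_iff_exists'.1 (Ne.symm hne)
      exact h ⟨hα, (lt_of_eq_some hb).1⟩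
    · rfl

theorem mk_range_restrict_lt (hlam : lam.IsStrongLimit) (hκlam : κ < lam) {β : Ordinal.{u}}
    (hβ : β < lam.ord) : #(range (restrict β : LevyColLt κ lam → _)) < lift.{u + 1} lam := by
  have hβ' : β.card < lam := lt_ord.1 hβ
  have hcodes : #(Iio β × Iio κ.ord → Option (Iio β)) =
      lift.{u + 1} ((β.card + 1) ^ (β.card * κ)) := by
    rw [← power_def, mk_option, mk_prod, mk_Iio_ordinal, mk_Iio_ordinal, card_ord]
    simp
  calc #(range (restrict β : LevyColLt κ lam → _)) ≤ #(range (decode κ β)) :=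
        mk_le_mk_of_subset (range_subset_iff.2 (restrict_mem_range_decode β))
    _ ≤ #(Iio β × Iio κ.ord → Option (Iio β)) := mk_range_le
    _ < lift.{u + 1} lam := by
        rw [hcodes, lift_lt]
        refine hlam.power_lt ?_ (mul_lt_of_lt hlam.aleph0_le hβ' hκlam)
        exact add_lt_of_lt hlam.aleph0_le hβ' (one_lt_aleph0.trans_le hlam.aleph0_le)

def RestrictionsSupportedBelow (A : Set (LevyColLt κ lam)) (β γ : Ordinal.{u}) : Prop :=
  ∀ p ∈ A, ∃ q ∈ A, restrict β q = restrict β p ∧ q.support ⊆ Iio γ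

theorem exists_restrictionsSupportedBelow (hreg : lam.IsRegular) (hlim : lam.IsStrongLimit)
    (hκlam : κ < lam) (A : Set (LevyColLt κ lam)) {β : Ordinal.{u}} (hβ : β < lam.ord) :
    ∃ γ < lam.ord, RestrictionsSupportedBelow A β γ := by
  have hW : ∀ t : restrict β '' A, ∃ q ∈ A, restrict β q = t := fun t => t.2
  choose W hWA hWt using hW
  have hU : #(⋃ t, (W t).support) < lift.{u + 1} lam := by
    rw [card_iUnion_lt_iff_forall_of_isRegular hreg.lift]
    · exact fun t => (W t).mk_support_lt.trans (lift_lt.2 hκlam)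
    · exact (mk_le_mk_of_subset (image_subset_range _ _)).trans_lt
        (mk_range_restrict_lt hlim hκlam hβ)
  obtain ⟨γ, hγ, hUγ⟩ := Ordinal.exists_lt_subset_Iio_of_mk_lt_cof
    (iUnion_subset fun t => (W t).support_subset_Iio) (by rwa [hreg.cof_ord])
  refine ⟨γ, hγ, fun p hp => ⟨W ⟨_, p, hp, rfl⟩, hWA _, hWt _, ?_⟩⟩
  exact (subset_iUnion (fun t => (W t).support) _).trans hUγ

theorem support_subset_Iio_of_closed (hκ : ℵ₀ ≤ κ) {A : Set (LevyColLt κ lam)}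
    (hA : IsStrongAntichain (flip LevyColLt.le) A) {B : Ordinal.{u}} (hB : B.cof = κ)
    (hclosed : ∀ β < B, ∃ γ < B, RestrictionsSupportedBelow A β γ)
    {p : LevyColLt κ lam} (hp : p ∈ A) : p.support ⊆ Iio B := by
  have hpB : #(p.support ∩ Iio B : Set _) < lift.{u + 1} B.cof :=
    by rw [hB]; exact (mk_le_mk_of_subset inter_subset_left).trans_lt p.mk_support_lt
  obtain ⟨β, hβ, hpβ⟩ := Ordinal.exists_lt_subset_Iio_of_mk_lt_cof inter_subset_right hpB
  obtain ⟨γ, hγ, hγA⟩ := hclosed β hβ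
  obtain ⟨q, hq, hqp, hqγ⟩ := hγA p hp
  have hqB : q.support ⊆ Iio B := hqγ.trans (Iio_subset_Iio hγ.le)
  obtain rfl : q = p :=
    eq_of_restrict_eq hκ hA hq hp hqp fun α ⟨hαq, hαp⟩ => hpβ ⟨hαp, hqB hαq⟩
  exact hqB

end LevyColLt

/-- If `κ` is a regular infinite cardinal and `λ > κ` is inaccessible, then `Col(κ,<λ)`
is `λ`-c.c.: every antichain (set of pairwise incompatible conditions) has cardinality
less than `λ`. -/
theorem levyColLt_cc (κ lam : Cardinal.{u}) (hκ : κ.IsRegular)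
    (hlam : lam.IsInaccessible) (hκlam : κ < lam)
    (A : Set (LevyColLt κ lam))
    (hA : ∀ p ∈ A, ∀ q ∈ A, p ≠ q → ¬ ∃ r, LevyColLt.le r p ∧ LevyColLt.le r q) :
    #(↥A) < Cardinal.lift.{u + 1} lam := by
  have hA' : IsStrongAntichain (flip LevyColLt.le) A := fun p hp q hq hne r =>
    not_and_or.1 fun hr => hA p hp q hq hne ⟨r, hr⟩
  obtain ⟨B, hBlam, hBcof, hBclosed⟩ := Ordinal.exists_closed_lt_ord_cof_eq hκ hlam.isRegular
    hκlam fun β hβ => LevyColLt.exists_restrictionsSupportedBelow hlam.isRegular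
      hlam.isStrongLimit hκlam A hβ
  have hinj : InjOn (LevyColLt.restrict B) A := fun p hp q hq hpq =>
    LevyColLt.eq_of_restrict_eq hκ.aleph0_le hA' hp hq hpq fun _ hα =>
      LevyColLt.support_subset_Iio_of_closed hκ.aleph0_le hA' hBcof hBclosed hp hα.1
  calc #A = #(LevyColLt.restrict B '' A) := (mk_image_eq_of_injOn _ _ hinj).symm
    _ ≤ #(range (LevyColLt.restrict B : LevyColLt κ lam → _)) :=
        mk_le_mk_of_subset (image_subset_range _ _)
    _ < lift.{u + 1} lam := LevyColLt.mk_range_restrict_lt hlam.isStrongLimit hκlam hBlam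
end

section
/- If κ is a regular infinite cardinal and λ > κ is a Mahlo cardinal, then the Easton collapse E(κ,λ) has precaliber λ: for every A ⊆ E(κ,λ) with |A| = λ there is B ⊆ A with |B| = λ such that every finite subset of B has a lower bound in E(κ,λ). -/
open Cardinal

universe u


/-- The coordinates of the Easton collapse `E(κ,λ)`: inaccessible cardinals in `(κ,λ)`. -/
def IsEastonIndex (κ lam α : Cardinal.{u}) : Prop :=
  α.IsInaccessible ∧ κ < α ∧ α < lam

/-- A condition of the Easton collapse `E(κ,λ)`, the Easton-support product of
`Col(κ,α)` over inaccessible `α ∈ (κ,λ)`: a function `p` assigning to each inaccessible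
`α ∈ (κ,λ)` a condition `p(α) ∈ Col(κ,α)` (and the empty condition to every other
coordinate), such that for every regular cardinal `γ ≤ λ` the set
`{α < γ : p(α) ≠ ∅}` has cardinality `< γ`. -/
def IsEastonCond (κ lam : Cardinal.{u}) (p : Cardinal.{u} → Ordinal.{u} → Option Ordinal.{u}) :
    Prop :=
  (∀ α, IsEastonIndex κ lam α → IsLevyCond κ α.ord (p α)) ∧
  (∀ α, ¬ IsEastonIndex κ lam α → p α = fun _ => none) ∧
  (∀ γ : Cardinal.{u}, γ.IsRegular → γ ≤ lam →
    #(↥{α : Cardinal.{u} | α < γ ∧ p α ≠ fun _ => none}) < Cardinal.lift.{u + 1} γ)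

/-- The Easton collapse `E(κ,λ)`. -/
def EastonCol (κ lam : Cardinal.{u}) : Type (u + 1) :=
  {p : Cardinal.{u} → Ordinal.{u} → Option Ordinal.{u} // IsEastonCond κ lam p}

/-- The coordinatewise order on `E(κ,λ)`: `p ≤ q` iff `p(α) ⊇ q(α)` for all `α`. -/
def EastonCol.le {κ lam : Cardinal.{u}} (p q : EastonCol κ lam) : Prop :=
  ∀ α a b, q.1 α a = some b → p.1 α a = some b


/-- `C` is a closed unbounded subset of the ordinal `lam`. -/
def IsClubIn (C : Set Ordinal.{u}) (lam : Ordinal.{u}) : Prop :=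
  C ⊆ Set.Iio lam ∧ (∀ β < lam, ∃ γ ∈ C, β ≤ γ) ∧
    (∀ β < lam, β ≠ 0 → (∀ γ < β, ∃ δ ∈ C, γ < δ ∧ δ < β) → β ∈ C)

/-- `λ` is Mahlo: `λ` is inaccessible and the set of inaccessible cardinals below `λ`
is stationary in `λ`, i.e. it meets every closed unbounded subset of `λ`. -/
def IsMahlo (lam : Cardinal.{u}) : Prop :=
  lam.IsInaccessible ∧
    ∀ C : Set Ordinal.{u}, IsClubIn C lam.ord →
      ∃ o ∈ C, ∃ α : Cardinal.{u}, α.IsInaccessible ∧ o = α.ord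

/-!
Enumerate `A` as `p_ξ` (`ξ < λ`). For inaccessible `α < λ` the part of `p_α` below `α` is bounded
below `α` (Easton support, `α` regular), and there are fewer than `λ` conditions bounded below a
fixed `δ < λ` (`λ` is a strong limit). Since the inaccessibles are stationary in `λ`, a
pressing-down argument gives unboundedly many `α` with the same part `q` below `α`. Thinning them
so that the support of each `p_α` lies below the next index gives a Δ-system with root `q`: two of
its conditions agree on every coordinate where both are nonempty, so finitely many of them have
their union as a common extension, and a finite union of Easton supports is an Easton support.
-/

open Set

namespace Cardinal

theorem IsStrongLimit.power_lt_s10 {c a b : Cardinal.{u}} (hc : c.IsStrongLimit) (ha : a < c)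
    (hb : b < c) : a ^ b < c :=
  calc a ^ b ≤ (2 ^ a) ^ b := power_le_power_right (cantor a).le
    _ = 2 ^ (a * b) := (power_mul).symm
    _ < c := hc.isStrongPrelimit (mul_lt_of_lt hc.aleph0_le ha hb)

theorem IsRegular.exists_lt_ord_forall_lt {c : Cardinal.{u}} (hc : c.IsRegular) {ι : Type v}
    (hι : Cardinal.lift.{u} #ι < Cardinal.lift.{v} c) {f : ι → Ordinal.{u}}
    (hf : ∀ i, f i < c.ord) : ∃ δ < c.ord, ∀ i, f i < δ := by
  refine ⟨⨆ i, f i + 1, Ordinal.lift_iSup_add_one_lt_of_lt_cof ?_ hf, fun i => ?_⟩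
  · rwa [← Ordinal.lift_cof, hc.cof_ord]
  · have hbdd : BddAbove (range fun i => f i + 1) := by
      refine ⟨c.ord, ?_⟩
      rintro _ ⟨i, rfl⟩
      exact Order.add_one_le_of_lt (hf i)
    exact (Order.lt_add_one_iff.2 le_rfl).trans_le (le_ciSup hbdd i)

theorem IsRegular.mk_eq_of_unbounded {c : Cardinal.{u}} (hc : c.IsRegular) {s : Set Ordinal.{u}}
    (hs : s ⊆ Iio c.ord) (hunb : ∀ β < c.ord, ∃ o ∈ s, β ≤ o) : #s = Cardinal.lift.{u + 1} c := by
  refine le_antisymm ?_ (not_lt.1 fun h => ?_)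
  · calc #s ≤ #(Iio c.ord) := mk_le_mk_of_subset hs
      _ = Cardinal.lift.{u + 1} c := by rw [mk_Iio_ordinal, card_ord]
  · obtain ⟨δ, hδ, hbound⟩ := hc.exists_lt_ord_forall_lt (ι := s)
      (by rwa [lift_id'.{u, u + 1}]) fun o => hs o.2
    obtain ⟨o, ho, hδo⟩ := hunb δ hδ
    exact (hbound ⟨o, ho⟩).not_ge hδo

end Cardinal

theorem isClubIn_setOf_forall_lt_imp_lt {c : Cardinal.{u}} (hc : c.IsRegular) (hℵ : ℵ₀ < c)
    {g : Ordinal.{u} → Ordinal.{u}} (hg : ∀ γ < c.ord, g γ < c.ord) :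
    IsClubIn {o | o < c.ord ∧ ∀ γ < o, g γ < o} c.ord := by
  -- `nfp next β` is closed under `g` because `next x` exceeds `g` on all of `Iio x`
  set next : Ordinal.{u} → Ordinal.{u} := fun x => ⨆ γ : Iio x, g γ + 1
  have hnext : ∀ x < c.ord, next x < c.ord := fun x hx =>
    Ordinal.lift_iSup_add_one_lt_of_lt_cof
      (by rwa [← Ordinal.lift_cof, hc.cof_ord, mk_Iio_ordinal, lift_lift, lift_lt, ← lt_ord])
      fun γ => hg γ (γ.2.trans hx)
  have lt_next : ∀ x, ∀ γ < x, g γ < next x := fun x γ hγ =>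
    (Order.lt_add_one_iff.2 le_rfl).trans_le (Ordinal.le_iSup (fun γ : Iio x => g γ + 1) ⟨γ, hγ⟩)
  refine ⟨fun o ho => ho.1,
    fun β hβ => ⟨Ordinal.nfp next β, ⟨?_, fun γ hγ => ?_⟩, Ordinal.le_nfp _ _⟩,
    fun β hβ _ hcl => ⟨hβ, fun γ hγ => ?_⟩⟩
  · exact Ordinal.nfp_lt_ord (by rwa [hc.cof_ord]) hnext hβ
  · obtain ⟨n, hn⟩ := Ordinal.lt_nfp_iff.1 hγ
    calc g γ < next (next^[n] β) := lt_next _ γ hn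
      _ = next^[n + 1] β := (Function.iterate_succ_apply' next n β).symm
      _ ≤ Ordinal.nfp next β := Ordinal.iterate_le_nfp next β (n + 1)
  · obtain ⟨δ, hδ, hγδ, hδβ⟩ := hcl γ hγ
    exact (hδ.2 γ hγδ).trans hδβ

theorem Cardinal.IsRegular.exists_separated_subset {c : Cardinal.{u}} (hc : c.IsRegular)
    (hℵ : ℵ₀ < c) {s : Set Ordinal.{u}} (hs : s ⊆ Iio c.ord)
    (hunb : ∀ β < c.ord, ∃ o ∈ s, β ≤ o) {d : Ordinal.{u} → Ordinal.{u}}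
    (hd : ∀ o < c.ord, d o < c.ord) :
    ∃ t ⊆ s, #t = Cardinal.lift.{u + 1} c ∧ ∀ o ∈ t, ∀ o' ∈ t, o < o' → d o ≤ o' := by
  -- every element of `s` below the least one above a closure point `γ` of `d` is `< γ`,
  -- hence so is its image under `d`
  set t := {o | ∃ γ, (γ < c.ord ∧ ∀ δ < γ, d δ < γ) ∧ IsLeast {x ∈ s | γ ≤ x} o}
  have hts : t ⊆ s := fun o ⟨_, _, ho⟩ => ho.1.1
  refine ⟨t, hts, hc.mk_eq_of_unbounded (hts.trans hs) fun β hβ => ?_, ?_⟩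
  · obtain ⟨γ, hγ, hβγ⟩ := (isClubIn_setOf_forall_lt_imp_lt hc hℵ hd).2.1 β hβ
    have hne : {x ∈ s | γ ≤ x}.Nonempty := hunb γ hγ.1
    exact ⟨_, ⟨γ, hγ, isLeast_csInf hne⟩, hβγ.trans (isLeast_csInf hne).1.2⟩
  · rintro o ⟨γ, -, ho⟩ o' ⟨γ', hγ', ho'⟩ hoo'
    have hoγ' : o < γ' := lt_of_not_ge fun h => (ho'.2 ⟨ho.1.1, h⟩).not_gt hoo'
    exact (hγ'.2 o hoγ').le.trans ho'.1.2

theorem IsMahlo.exists_unbounded_fiber {lam : Cardinal.{u}} (hM : IsMahlo lam) {X : Type v}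
    (H : Ordinal.{u} → Set X) (hH : ∀ γ < lam.ord, lift.{u} #(H γ) < lift.{v} lam)
    (f : Ordinal.{u} → X)
    (hf : ∀ α : Cardinal.{u}, α.IsInaccessible → α < lam → ∃ δ < α.ord, f α.ord ∈ H δ) :
    ∃ x, ∀ β < lam.ord, ∃ o ∈ {o | o < lam.ord ∧ f o = x}, β ≤ o := by
  obtain ⟨hℵ, hreg, -⟩ := isInaccessible_def.1 hM.1
  by_contra! hbdd
  choose b hb hfb using hbdd
  have hg : ∀ γ < lam.ord, ∃ δ < lam.ord, ∀ x : H γ, b x < δ := fun γ hγ =>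
    hreg.exists_lt_ord_forall_lt (hH γ hγ) fun x => hb x
  choose! g hg hgb using hg
  obtain ⟨o, ho, α, hα, rfl⟩ := hM.2 _ (isClubIn_setOf_forall_lt_imp_lt hreg hℵ hg)
  obtain ⟨δ, hδ, hfδ⟩ := hf α hα (ord_lt_ord.1 ho.1)
  have hbα : b (f α.ord) < α.ord := (hgb δ (hδ.trans ho.1) ⟨_, hfδ⟩).trans (ho.2 δ hδ)
  exact (hfb (f α.ord) α.ord ⟨ho.1, rfl⟩).not_ge hbα.le

theorem exists_injOn_Iio_ord_of_mk_eq {X : Type (u + 1)} {A : Set X} {c : Cardinal.{u}}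
    (hA : #A = Cardinal.lift.{u + 1} c) (hc : c ≠ 0) :
    ∃ P : Ordinal.{u} → X, (∀ o, P o ∈ A) ∧ InjOn P (Iio c.ord) := by
  obtain ⟨e⟩ := Cardinal.eq.1 (hA.trans (by rw [mk_Iio_ordinal, card_ord]) :
    #A = #(Iio c.ord))
  have h0 : (0 : Ordinal) < c.ord := ord_pos.2 (pos_iff_ne_zero.2 hc)
  refine ⟨fun o => if h : o < c.ord then e.symm ⟨o, h⟩ else e.symm ⟨0, h0⟩, fun o => ?_,
    fun o ho o' ho' h => ?_⟩
  · dsimp only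
    split_ifs <;> exact Subtype.prop _
  · simp only [dif_pos (show o < c.ord from ho), dif_pos (show o' < c.ord from ho')] at h
    exact congrArg Subtype.val (e.symm.injective (Subtype.val_injective h))

noncomputable def restrictBelow (p : Cardinal.{u} → Ordinal.{u} → Option Ordinal.{u})
    (o : Ordinal.{u}) : Cardinal.{u} → Ordinal.{u} → Option Ordinal.{u} :=
  fun β => if β.ord < o then p β else fun _ => none

def IsBoundedBy (κ : Cardinal.{u}) (γ : Ordinal.{u})
    (q : Cardinal.{u} → Ordinal.{u} → Option Ordinal.{u}) : Prop :=
  ∀ β a b, q β a = some b → β.ord < γ ∧ a < κ.ord ∧ b < γ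

theorem mk_setOf_isBoundedBy_lt {κ lam : Cardinal.{u}} {γ : Ordinal.{u}}
    (hlam : lam.IsStrongLimit) (hκ : κ < lam) (hγ : γ < lam.ord) :
    #{q | IsBoundedBy κ γ q} < Cardinal.lift.{u + 1} lam := by
  let code (q : {q // IsBoundedBy κ γ q}) (β : Iio γ) (a : Iio κ.ord) : Option (Iio γ) :=
    (q.1 β.1.card a).attachWith (· ∈ Iio γ) fun b hb => (q.2 _ _ b hb).2.2
  let decode (φ : Iio γ → Iio κ.ord → Option (Iio γ)) (β : Cardinal.{u}) (a : Ordinal.{u}) :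
      Option Ordinal.{u} :=
    if h : β.ord < γ ∧ a < κ.ord then (φ ⟨β.ord, h.1⟩ ⟨a, h.2⟩).map Subtype.val else none
  have hdecode : ∀ q, decode (code q) = q.1 := by
    intro q
    funext β a
    by_cases h : β.ord < γ ∧ a < κ.ord
    · simp [decode, code, h]
    · simp only [decode, dif_neg h]
      refine (Option.eq_none_iff_forall_ne_some.2 fun b hb => h ?_).symm
      exact ⟨(q.2 β a b hb).1, (q.2 β a b hb).2.1⟩
  have hγlam : γ.card < lam := lt_ord.1 hγ
  calc #{q | IsBoundedBy κ γ q} ≤ #(Iio γ → Iio κ.ord → Option (Iio γ)) :=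
        mk_le_of_injective (f := code) fun q q' h =>
          Subtype.ext ((hdecode q).symm.trans (h ▸ hdecode q'))
    _ = Cardinal.lift.{u + 1} (((γ.card + 1) ^ κ) ^ γ.card) := by
        simp [mk_Iio_ordinal]
    _ < Cardinal.lift.{u + 1} lam := by
        refine lift_lt.2 (hlam.power_lt_s10 (hlam.power_lt_s10 ?_ hκ) hγlam)
        exact add_lt_of_lt hlam.aleph0_le hγlam (one_lt_aleph0.trans_le hlam.aleph0_le)

theorem eq_of_restrictBelow_eq {p p' : Cardinal.{u} → Ordinal.{u} → Option Ordinal.{u}}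
    {o o' : Ordinal.{u}} (hpp' : restrictBelow p o = restrictBelow p' o')
    (hp : ∀ β, p β ≠ (fun _ => none) → β.ord < o') {β : Cardinal.{u}}
    (hβ : p β ≠ fun _ => none) (hβ' : p' β ≠ fun _ => none) : p β = p' β := by
  have hrestr : restrictBelow p o β = p' β := (congrFun hpp' β).trans (if_pos (hp β hβ))
  by_cases ho : β.ord < o
  · exact (if_pos ho).symm.trans hrestr
  · exact absurd ((if_neg ho).symm.trans hrestr).symm hβ'

theorem isLevyCond_empty {κ : Cardinal.{u}} (hκ : κ ≠ 0) (o : Ordinal.{u}) :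
    IsLevyCond κ o fun _ => none :=
  ⟨fun _ h => (h rfl).elim, fun _ _ h => (nomatch h), by simp [pos_iff_ne_zero.2 hκ]⟩

namespace IsEastonCond

variable {κ lam : Cardinal.{u}} {p : Cardinal.{u} → Ordinal.{u} → Option Ordinal.{u}}

theorem isEastonIndex (hp : IsEastonCond κ lam p) {β : Cardinal.{u}}
    (hβ : p β ≠ fun _ => none) : IsEastonIndex κ lam β :=
  Classical.byContradiction fun h => hβ (hp.2.1 β h)

theorem exists_ord_bound_support_lt (hp : IsEastonCond κ lam p) {γ : Cardinal.{u}}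
    (hγ : γ.IsRegular) (hγlam : γ ≤ lam) :
    ∃ δ < γ.ord, ∀ β < γ, p β ≠ (fun _ => none) → β.ord < δ := by
  obtain ⟨δ, hδ, hbound⟩ := hγ.exists_lt_ord_forall_lt
    (ι := {β | β < γ ∧ p β ≠ fun _ => none})
    (by rw [lift_id'.{u, u + 1}]; exact hp.2.2 γ hγ hγlam)
    fun β => ord_lt_ord.2 β.2.1
  exact ⟨δ, hδ, fun β hβ hne => hbound ⟨β, hβ, hne⟩⟩

theorem exists_ord_bound_support (hp : IsEastonCond κ lam p) (hlam : lam.IsRegular) :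
    ∃ δ < lam.ord, ∀ β, p β ≠ (fun _ => none) → β.ord < δ := by
  obtain ⟨δ, hδ, hbound⟩ := hp.exists_ord_bound_support_lt hlam le_rfl
  exact ⟨δ, hδ, fun β hne => hbound β (hp.isEastonIndex hne).2.2 hne⟩

theorem exists_isBoundedBy_restrictBelow (hp : IsEastonCond κ lam p) {α : Cardinal.{u}}
    (hα : α.IsRegular) (hαlam : α ≤ lam) :
    ∃ δ < α.ord, IsBoundedBy κ δ (restrictBelow p α.ord) := by
  obtain ⟨δ, hδ, hbound⟩ := hp.exists_ord_bound_support_lt hα hαlam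
  refine ⟨δ, hδ, fun β a b hb => ?_⟩
  by_cases hβα : β.ord < α.ord
  · simp only [restrictBelow, if_pos hβα] at hb
    have hne : p β ≠ fun _ => none := fun h => by simp [h] at hb
    have hlevy := hp.1 β (hp.isEastonIndex hne)
    have hβδ := hbound β (ord_lt_ord.1 hβα) hne
    exact ⟨hβδ, hlevy.1 a (by simp [hb]), (hlevy.2.1 a b hb).trans hβδ⟩
  · simp only [restrictBelow, if_neg hβα, reduceCtorEq] at hb

end IsEastonCond

theorem EastonCol.exists_le_of_coherent {κ lam : Cardinal.{u}} (hκ : κ ≠ 0)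
    {S : Set (EastonCol κ lam)} (hS : S.Finite)
    (hcoh : ∀ x ∈ S, ∀ y ∈ S, ∀ β,
      x.1 β ≠ (fun _ => none) → y.1 β ≠ (fun _ => none) → x.1 β = y.1 β) :
    ∃ r : EastonCol κ lam, ∀ p ∈ S, EastonCol.le r p := by
  classical
  let r (β : Cardinal.{u}) : Ordinal.{u} → Option Ordinal.{u} :=
    if h : ∃ y ∈ S, y.1 β ≠ fun _ => none then h.choose.1 β else fun _ => none
  have hr : ∀ β, r β ≠ (fun _ => none) → ∃ y ∈ S, r β = y.1 β := by
    intro β hβ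
    by_cases h : ∃ y ∈ S, y.1 β ≠ fun _ => none
    · exact ⟨h.choose, h.choose_spec.1, dif_pos h⟩
    · exact (hβ (dif_neg h)).elim
  have hle : ∀ p ∈ S, ∀ β, p.1 β ≠ (fun _ => none) → r β = p.1 β := by
    intro p hp β hβ
    have h : ∃ y ∈ S, y.1 β ≠ fun _ => none := ⟨p, hp, hβ⟩
    exact (dif_pos h).trans (hcoh _ h.choose_spec.1 p hp β h.choose_spec.2 hβ)
  have hcond : IsEastonCond κ lam r := by
    refine ⟨fun β hβ => ?_, fun β hβ => ?_, fun γ hγ hγlam => ?_⟩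
    · by_cases h : r β = fun _ => none
      · rw [h]; exact isLevyCond_empty hκ _
      · obtain ⟨y, -, hy⟩ := hr β h
        rw [hy]; exact y.2.1 β hβ
    · by_contra h
      obtain ⟨y, -, hy⟩ := hr β h
      exact h (hy.trans (y.2.2.1 β hβ))
    · have hsub : {β | β < γ ∧ r β ≠ fun _ => none} ⊆
          ⋃ y ∈ S, {β | β < γ ∧ y.1 β ≠ fun _ => none} := by
        rintro β ⟨hβγ, hβ⟩
        obtain ⟨y, hy, hry⟩ := hr β hβ
        exact mem_biUnion hy ⟨hβγ, hry ▸ hβ⟩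
      have hSγ : #S < lift.{u + 1} γ := (lt_aleph0_iff_set_finite.2 hS).trans_le hγ.lift.aleph0_le
      exact (mk_le_mk_of_subset hsub).trans_lt
        ((card_biUnion_lt_iff_forall_of_isRegular hγ.lift hSγ).2 fun y _ => y.2.2.2 γ hγ hγlam)
  refine ⟨⟨r, hcond⟩, fun p hp β a b hb => ?_⟩
  have hne : p.1 β ≠ fun _ => none := fun h => by simp [h] at hb
  show r β a = some b
  rwa [hle p hp β hne]

/-- If `κ` is a regular infinite cardinal and `λ > κ` is Mahlo, then the Easton collapse
`E(κ,λ)` has precaliber `λ`: every `A ⊆ E(κ,λ)` of size `λ` has a subset `B` of size `λ`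
every finite subset of which has a lower bound in `E(κ,λ)`. -/
theorem eastonCol_precaliber (κ lam : Cardinal.{u}) (hκ : κ.IsRegular) (hκlam : κ < lam)
    (hM : IsMahlo lam) (A : Set (EastonCol κ lam)) (hA : #(↥A) = Cardinal.lift.{u + 1} lam) :
    ∃ B : Set (EastonCol κ lam), B ⊆ A ∧ #(↥B) = Cardinal.lift.{u + 1} lam ∧
      ∀ S : Set (EastonCol κ lam), S ⊆ B → S.Finite →
        ∃ r : EastonCol κ lam, ∀ p ∈ S, EastonCol.le r p := by
  obtain ⟨hℵ, hreg, hlam⟩ := isInaccessible_def.1 hM.1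
  obtain ⟨P, hPA, hPinj⟩ := exists_injOn_Iio_ord_of_mk_eq hA hlam.ne_zero
  obtain ⟨q, hq⟩ := hM.exists_unbounded_fiber (fun γ => {q | IsBoundedBy κ γ q})
    (fun γ hγ => by
      rw [lift_id'.{u, u + 1}]; exact mk_setOf_isBoundedBy_lt hlam hκlam hγ)
    (fun o => restrictBelow (P o).1 o)
    fun α hα hαlam => (P α.ord).2.exists_isBoundedBy_restrictBelow hα.isRegular hαlam.le
  choose d hd hsupp using fun o => (P o).2.exists_ord_bound_support hreg
  obtain ⟨t, hts, ht, hsep⟩ := hreg.exists_separated_subset hℵ (fun o ho => ho.1) hq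
    fun o _ => hd o
  refine ⟨P '' t, image_subset_iff.2 fun o _ => hPA o, ?_, fun S hSB hS => ?_⟩
  · rw [mk_image_eq_of_injOn _ _ (hPinj.mono fun o ho => (hts ho).1), ht]
  refine EastonCol.exists_le_of_coherent hκ.pos.ne' hS ?_
  rintro _ hx _ hy β
  obtain ⟨o, ho, rfl⟩ := hSB hx
  obtain ⟨o', ho', rfl⟩ := hSB hy
  have hroot : restrictBelow (P o).1 o = restrictBelow (P o').1 o' :=
    (hts ho).2.trans (hts ho').2.symm
  rcases lt_trichotomy o o' with h | rfl | h
  · exact eq_of_restrictBelow_eq hroot fun β hβ => (hsupp o β hβ).trans_le (hsep o ho o' ho' h)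
  · exact fun _ _ => rfl
  · exact fun hβ hβ' => (eq_of_restrictBelow_eq hroot.symm
      (fun β hβ => (hsupp o' β hβ).trans_le (hsep o' ho' o ho h)) hβ' hβ).symm
end

section
/- Let κ be a regular infinite cardinal and let β < γ be cardinals with κ < β. Suppose X is a nonempty subset of E(κ,γ) that has a lower bound in E(κ,γ). Then X has an infimum inf X in E(κ,γ) (namely the coordinatewise union of the conditions in X), and the restriction maps are continuous: (inf X) ↾ β = inf { p ↾ β : p ∈ X }, where p ↾ β denotes the condition obtained from p by restricting its domain to the inaccessible cardinals below β. -/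
open Cardinal

universe u


/-- The restriction `p ↾ β` of (the underlying function of) an Easton condition to the
coordinates below `β`: the condition obtained from `p` by restricting its domain to the
(inaccessible) cardinals below `β`. -/
noncomputable def restrictFun (β : Cardinal.{u})
    (p : Cardinal.{u} → Ordinal.{u} → Option Ordinal.{u}) :
    Cardinal.{u} → Ordinal.{u} → Option Ordinal.{u} :=
  fun α => if α < β then p α else fun _ => none

lemma restrict_isEastonCond {κ β γ : Cardinal.{u}} (hβγ : β ≤ γ)
    {p : Cardinal.{u} → Ordinal.{u} → Option Ordinal.{u}} (hp : IsEastonCond κ γ p) :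
    IsEastonCond κ β (restrictFun β p) := by
  obtain ⟨h1, h2, h3⟩ := hp
  refine ⟨?_, ?_, ?_⟩
  · intro α hα
    have hlt : α < β := hα.2.2
    have : IsEastonIndex κ γ α := ⟨hα.1, hα.2.1, lt_of_lt_of_le hlt hβγ⟩
    simpa [restrictFun, hlt] using h1 α this
  · intro α hα
    by_cases hlt : α < β
    · have hng : ¬ IsEastonIndex κ γ α := fun h => hα ⟨h.1, h.2.1, hlt⟩
      simp [restrictFun, hlt, h2 α hng]
    · simp [restrictFun, hlt]
  · intro γ' hreg hle
    refine lt_of_le_of_lt (Cardinal.mk_le_mk_of_subset ?_) (h3 γ' hreg (hle.trans hβγ))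
    rintro α ⟨h4, h5⟩
    refine ⟨h4, fun hc => h5 ?_⟩
    unfold restrictFun
    by_cases hlt : α < β <;> simp [hlt, hc]

/-- Dominated conditions: if `f`'s graph is contained in `g`'s and `g` is an Easton
condition, and `f` vanishes off Easton indices, then `f` is an Easton condition. -/
lemma isEastonCond_of_subgraph {κ γ : Cardinal.{u}}
    {f g : Cardinal.{u} → Ordinal.{u} → Option Ordinal.{u}}
    (hg : IsEastonCond κ γ g)
    (hsub : ∀ α a b, f α a = some b → g α a = some b)
    (hz : ∀ α, ¬ IsEastonIndex κ γ α → f α = fun _ => none) :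
    IsEastonCond κ γ f := by
  obtain ⟨h1, h2, h3⟩ := hg
  have hne : ∀ α a, f α a ≠ none → g α a ≠ none := by
    intro α a hf
    obtain ⟨b, hb⟩ := Option.ne_none_iff_exists'.1 hf
    simp [hsub α a b hb]
  refine ⟨?_, hz, ?_⟩
  · intro α hα
    obtain ⟨l1, l2, l3⟩ := h1 α hα
    refine ⟨fun a ha => l1 a (hne α a ha), fun a b hb => l2 a b (hsub α a b hb), ?_⟩
    exact lt_of_le_of_lt (Cardinal.mk_le_mk_of_subset (fun a ha => hne α a ha)) l3
  · intro γ' hreg hle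
    refine lt_of_le_of_lt (Cardinal.mk_le_mk_of_subset ?_) (h3 γ' hreg hle)
    rintro α ⟨h4, h5⟩
    refine ⟨h4, fun hc => h5 (funext fun a => ?_)⟩
    by_contra hne'
    exact hne α a hne' (by simp [hc])

/-- Let `κ` be a regular infinite cardinal and `β < γ` cardinals with `κ < β`.  If `X` is
a nonempty subset of `E(κ,γ)` with a lower bound, then `X` has an infimum in `E(κ,γ)`,
namely the coordinatewise union `m` of the conditions in `X`, and the restriction maps
are continuous: `m ↾ β` is (a condition of `E(κ,β)` and) the infimum in `E(κ,β)` of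
`{p ↾ β : p ∈ X}` (all of which are conditions of `E(κ,β)`). -/
theorem eastonCol_inf_restrict (κ β γ : Cardinal.{u}) (hκ : κ.IsRegular)
    (hκβ : κ < β) (hβγ : β < γ)
    (X : Set (EastonCol κ γ)) (hne : X.Nonempty)
    (hbd : ∃ r : EastonCol κ γ, ∀ p ∈ X, EastonCol.le r p) :
    ∃ m : EastonCol κ γ,
      -- `m` is the coordinatewise union of the conditions in `X`
      (∀ α a b, m.1 α a = some b ↔ ∃ p ∈ X, p.1 α a = some b) ∧
      -- `m` is the infimum of `X` in `E(κ,γ)`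
      (∀ p ∈ X, EastonCol.le m p) ∧
      (∀ r : EastonCol κ γ, (∀ p ∈ X, EastonCol.le r p) → EastonCol.le r m) ∧
      -- each restriction `p ↾ β` for `p ∈ X` is a condition of `E(κ,β)`
      (∀ p ∈ X, ∃ q : EastonCol κ β, q.1 = restrictFun β p.1) ∧
      -- `m ↾ β` is a condition of `E(κ,β)` and is the infimum there of the restrictions
      ∃ m' : EastonCol κ β, m'.1 = restrictFun β m.1 ∧
        (∀ q : EastonCol κ β, (∃ p ∈ X, q.1 = restrictFun β p.1) → EastonCol.le m' q) ∧
        (∀ r : EastonCol κ β,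
          (∀ q : EastonCol κ β, (∃ p ∈ X, q.1 = restrictFun β p.1) → EastonCol.le r q) →
          EastonCol.le r m') := by
  classical
  obtain ⟨r, hr⟩ := hbd
  set mf : Cardinal.{u} → Ordinal.{u} → Option Ordinal.{u} :=
    fun α a => if ∃ p ∈ X, ∃ b, p.1 α a = some b then r.1 α a else none with hmf
  have key : ∀ α a b, mf α a = some b ↔ ∃ p ∈ X, p.1 α a = some b := by
    intro α a b
    constructor
    · intro h
      by_cases hc : ∃ p ∈ X, ∃ b, p.1 α a = some b
      · obtain ⟨p, hp, b', hb'⟩ := hc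
        have hrb : r.1 α a = some b' := hr p hp α a b' hb'
        have : mf α a = some b' := by simp [hmf, hrb]; exact ⟨p, hp, b', hb'⟩
        rw [h] at this
        exact ⟨p, hp, by rw [Option.some_inj.1 this]; exact hb'⟩
      · simp [hmf, hc] at h
    · rintro ⟨p, hp, hb⟩
      have hc : ∃ p ∈ X, ∃ b, p.1 α a = some b := ⟨p, hp, b, hb⟩
      simp only [hmf, if_pos hc]
      exact hr p hp α a b hb
  have hsub : ∀ α a b, mf α a = some b → r.1 α a = some b := by
    intro α a b h
    obtain ⟨p, hp, hb⟩ := (key α a b).1 h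
    exact hr p hp α a b hb
  have hz : ∀ α, ¬ IsEastonIndex κ γ α → mf α = fun _ => none := by
    intro α hα
    funext a
    have hc : ¬ ∃ p ∈ X, ∃ b, p.1 α a = some b := by
      rintro ⟨p, hp, b, hb⟩
      have := p.2.2.1 α hα
      rw [this] at hb
      simp at hb
    simp [hmf, hc]
  have hmc : IsEastonCond κ γ mf := isEastonCond_of_subgraph r.2 hsub hz
  refine ⟨⟨mf, hmc⟩, key, ?_, ?_, ?_, ?_⟩
  · intro p hp α a b hb
    exact (key α a b).2 ⟨p, hp, hb⟩
  · intro r' hr' α a b hb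
    obtain ⟨p, hp, hb'⟩ := (key α a b).1 hb
    exact hr' p hp α a b hb'
  · intro p hp
    exact ⟨⟨restrictFun β p.1, restrict_isEastonCond hβγ.le p.2⟩, rfl⟩
  · refine ⟨⟨restrictFun β mf, restrict_isEastonCond hβγ.le hmc⟩, rfl, ?_, ?_⟩
    · rintro q ⟨p, hp, hq⟩ α a b hb
      rw [hq] at hb
      by_cases hlt : α < β
      · simp only [restrictFun, if_pos hlt] at hb ⊢
        exact (key α a b).2 ⟨p, hp, hb⟩
      · simp [restrictFun, hlt] at hb
    · intro r' hr' α a b hb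
      by_cases hlt : α < β
      · simp only [restrictFun, if_pos hlt] at hb
        obtain ⟨p, hp, hb'⟩ := (key α a b).1 hb
        have hq := hr' ⟨restrictFun β p.1, restrict_isEastonCond hβγ.le p.2⟩ ⟨p, hp, rfl⟩
        exact hq α a b (by simp [restrictFun, hlt, hb'])
      · simp [restrictFun, hlt] at hb
end
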